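/- arXiv:1703.06178 — 6 statements merged into one kernel-verified Lean document; each statement's English description precedes it below -/
import Mathlib

section
/- With Φ the fundamental solution as above, if the function x ↦ φ₁₂(a,x) is strictly positive on the interval (a,b), then the function x ↦ φ₁₂(x,b) is strictly positive on (a,b). -/
/-!
Write `p = 2α/σ²` and `q = 2r/σ²`. For every base point `c`, the pair `u = φ₁₂(c, ·)`,
`v = φ₂₂(c, ·)` solves `u' = v`, `v' = q u - p v` with `u(c) = 0`, `v(c) = 1`. For two solutions
the Wronskian `W = u₁ v₂ - v₁ u₂` satisfies `W' = -p W`, so it cannot reach `0` from a positive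
value. With the solutions based at `a` and at `x`, `W(x) = φ₁₂(a, x) > 0`, hence `W > 0` on
`[x, b]`. At a zero `y` of `φ₁₂(x, ·)` this reads `φ₁₂(a, y) φ₂₂(x, y) > 0` with `φ₁₂(a, y) ≥ 0`,
so `φ₂₂(x, y) > 0`: `φ₁₂(x, ·)` only crosses zero upwards, and starting from `0` at `x` it stays
positive on `(x, b]`.

The integral equations carry no information where their integrands fail to be integrable (the
integral is then `0`), so integrability is established first, by continuation: up to the
supremum of the integrability interval the solution is bounded, because on a final piece where
`∫ (1 + |p| + |q|) ≤ 1/2` the integral inequality for `|u| + |v|` is a contraction.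
-/

open MeasureTheory Set intervalIntegral

theorem IntervalIntegrable.of_mem_Icc {f : ℝ → ℝ} {a b c d : ℝ}
    (hf : IntervalIntegrable f volume c d) (ha : a ∈ Icc c d) (hb : b ∈ Icc c d) :
    IntervalIntegrable f volume a b :=
  hf.mono_set (uIcc_subset_uIcc (Icc_subset_uIcc ha) (Icc_subset_uIcc hb))

theorem MeasureTheory.IntegrableOn.intervalIntegrable_of_mem_Icc {f : ℝ → ℝ} {a b c d : ℝ}
    (hf : IntegrableOn f (Icc c d)) (ha : a ∈ Icc c d) (hb : b ∈ Icc c d) :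
    IntervalIntegrable f volume a b :=
  (hf.mono_set (uIcc_subset_Icc ha hb)).intervalIntegrable

theorem continuousOn_of_eq_add_integral {u v : ℝ → ℝ} {c d C : ℝ}
    (hv : IntervalIntegrable v volume c d) (hu : ∀ y ∈ Icc c d, u y = C + ∫ z in c..y, v z) :
    ContinuousOn u (Icc c d) :=
  ((continuousOn_const.add (continuousOn_primitive_interval' hv left_mem_uIcc)).mono
    Icc_subset_uIcc).congr hu

theorem eq_add_integral_of_mem_Icc {u v : ℝ → ℝ} {c d c' : ℝ}
    (hv : IntervalIntegrable v volume c d) (hu : ∀ y ∈ Icc c d, u y = u c + ∫ z in c..y, v z)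
    (hc' : c' ∈ Icc c d) : ∀ y ∈ Icc c d, u y = u c' + ∫ z in c'..y, v z := by
  intro y hy
  have hc : c ∈ Icc c d := ⟨le_rfl, hc'.1.trans hc'.2⟩
  rw [hu y hy, hu c' hc', add_assoc,
    integral_add_adjacent_intervals (hv.of_mem_Icc hc hc') (hv.of_mem_Icc hc' hy)]

theorem mul_eq_add_integral {f g F G : ℝ → ℝ} {a b : ℝ} (hab : a ≤ b)
    (hf : IntervalIntegrable f volume a b) (hg : IntervalIntegrable g volume a b)
    (hF : ∀ t ∈ Icc a b, F t = F a + ∫ x in a..t, f x)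
    (hG : ∀ t ∈ Icc a b, G t = G a + ∫ x in a..t, g x) :
    F b * G b = F a * G a + ∫ t in a..b, (f t * G t + F t * g t) := by
  have hF' := ((LipschitzWith.const (F a)).lipschitzOnWith (s := uIcc a b)
    ).absolutelyContinuousOnInterval.fun_add
      (hf.absolutelyContinuousOnInterval_intervalIntegral left_mem_uIcc)
  have hG' := ((LipschitzWith.const (G a)).lipschitzOnWith (s := uIcc a b)
    ).absolutelyContinuousOnInterval.fun_add
      (hg.absolutelyContinuousOnInterval_intervalIntegral left_mem_uIcc)
  have key := hF'.integral_deriv_mul_eq_sub hG'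
  simp only [integral_same, add_zero] at key
  have hb : b ∈ Icc a b := right_mem_Icc.mpr hab
  rw [hF b hb, hG b hb, eq_add_of_sub_eq' key.symm]
  congr 1
  refine integral_congr_ae ?_
  filter_upwards [hf.ae_hasDerivAt_integral, hg.ae_hasDerivAt_integral] with t hft hgt ht
  have ht' : t ∈ Icc a b := uIcc_of_le hab ▸ uIoc_subset_uIcc ht
  rw [((hft (Icc_subset_uIcc ht') a left_mem_uIcc).const_add _).deriv,
    ((hgt (Icc_subset_uIcc ht') a left_mem_uIcc).const_add _).deriv, ← hF t ht', ← hG t ht']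

theorem le_two_mul_of_le_add_integral {f k : ℝ → ℝ} {s t A : ℝ}
    (hf : ContinuousOn f (Icc s t)) (hf₀ : ∀ y ∈ Icc s t, 0 ≤ f y)
    (hk : IntegrableOn k (Icc s t)) (hk₀ : ∀ y ∈ Icc s t, 0 ≤ k y)
    (hk_half : ∫ z in s..t, k z ≤ 1 / 2)
    (h : ∀ y ∈ Icc s t, f y ≤ A + ∫ z in s..t, k z * f z) :
    ∀ y ∈ Icc s t, f y ≤ 2 * A := by
  intro y hy
  have hs : s ∈ Icc s t := left_mem_Icc.mpr (hy.1.trans hy.2)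
  have ht : t ∈ Icc s t := right_mem_Icc.mpr (hy.1.trans hy.2)
  obtain ⟨m, hm, hmax⟩ := isCompact_Icc.exists_isMaxOn ⟨y, hy⟩ hf
  have hkf : ∫ z in s..t, k z * f z ≤ f m / 2 :=
    calc ∫ z in s..t, k z * f z ≤ ∫ z in s..t, k z * f m :=
          integral_mono_on hs.2
            ((hk.mul_continuousOn hf isCompact_Icc).intervalIntegrable_of_mem_Icc hs ht)
            (IntegrableOn.intervalIntegrable_of_mem_Icc (hk.mul_const _) hs ht)
            fun z hz => mul_le_mul_of_nonneg_left (hmax hz) (hk₀ z hz)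
      _ = (∫ z in s..t, k z) * f m := integral_mul_const _ _
      _ ≤ f m / 2 := by nlinarith [hf₀ m hm]
  linarith [isMaxOn_iff.mp hmax y hy, h m hm]

theorem continuousOn_Ico_of_forall_continuousOn_Icc {f : ℝ → ℝ} {c d : ℝ}
    (hf : ∀ e ∈ Ico c d, ContinuousOn f (Icc c e)) : ContinuousOn f (Ico c d) :=
  continuousOn_of_locally_continuousOn fun z hz => by
    obtain ⟨e, hze, hed⟩ := exists_between hz.2
    exact ⟨Iio e, isOpen_Iio, hze,
      (hf e ⟨hz.1.trans hze.le, hed⟩).mono fun t ht => ⟨ht.1.1, ht.2.le⟩⟩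

theorem exists_integral_lt {k : ℝ → ℝ} {c y ε : ℝ} (hcy : c < y)
    (hk : IntegrableOn k (Icc c y)) (hε : 0 < ε) : ∃ t ∈ Ico c y, ∫ z in t..y, k z < ε := by
  have hcont : ContinuousWithinAt (fun t => ∫ z in t..y, k z) (Ico c y) y := by
    have := continuousOn_primitive_interval_left (a := c) (b := y) (μ := volume)
      (by rwa [uIcc_of_le hcy.le])
    rw [uIcc_of_le hcy.le] at this
    exact (this y (right_mem_Icc.mpr hcy.le)).mono Ico_subset_Icc_self
  have hlt : ∀ᶠ t in nhdsWithin y (Ico c y), ∫ z in t..y, k z < ε :=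
    hcont.eventually (gt_mem_nhds (by simpa using hε))
  have : (nhdsWithin y (Ico c y)).NeBot := by
    rw [nhdsWithin_Ico_eq_nhdsLT hcy]; infer_instance
  exact (hlt.and self_mem_nhdsWithin).exists.imp fun t ht => ⟨ht.2, ht.1⟩

/-- `(u, v)` solves `u' = v`, `v' = q u - p v` on `[c, d]`, in integrated form. -/
structure IsSolutionOn (p q u v : ℝ → ℝ) (c d : ℝ) : Prop where
  intervalIntegrable_v : IntervalIntegrable v volume c d
  intervalIntegrable_rhs : IntervalIntegrable (fun z => q z * u z - p z * v z) volume c d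
  eq_u : ∀ y ∈ Icc c d, u y = u c + ∫ z in c..y, v z
  eq_v : ∀ y ∈ Icc c d, v y = v c + ∫ z in c..y, (q z * u z - p z * v z)

namespace IsSolutionOn

variable {p q u v : ℝ → ℝ} {c d : ℝ}

theorem continuousOn_u (h : IsSolutionOn p q u v c d) : ContinuousOn u (Icc c d) :=
  continuousOn_of_eq_add_integral h.intervalIntegrable_v h.eq_u

theorem continuousOn_v (h : IsSolutionOn p q u v c d) : ContinuousOn v (Icc c d) :=
  continuousOn_of_eq_add_integral h.intervalIntegrable_rhs h.eq_v

theorem mono (h : IsSolutionOn p q u v c d) {c' d' : ℝ} (hc : c ≤ c') (hcd' : c' ≤ d')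
    (hd : d' ≤ d) : IsSolutionOn p q u v c' d' := by
  have hc' : c' ∈ Icc c d := ⟨hc, hcd'.trans hd⟩
  have hd' : d' ∈ Icc c d := ⟨hc.trans hcd', hd⟩
  have hsub : Icc c' d' ⊆ Icc c d := Icc_subset_Icc hc hd
  exact ⟨h.intervalIntegrable_v.of_mem_Icc hc' hd', h.intervalIntegrable_rhs.of_mem_Icc hc' hd',
    fun y hy => eq_add_integral_of_mem_Icc h.intervalIntegrable_v h.eq_u hc' y (hsub hy),
    fun y hy => eq_add_integral_of_mem_Icc h.intervalIntegrable_rhs h.eq_v hc' y (hsub hy)⟩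

theorem abs_add_abs_le (h : IsSolutionOn p q u v c d) (hp : IntegrableOn p (Icc c d))
    (hq : IntegrableOn q (Icc c d)) :
    ∀ y ∈ Icc c d, |u y| + |v y| ≤
      |u c| + |v c| + ∫ z in c..d, (1 + |p z| + |q z|) * (|u z| + |v z|) := by
  intro y hy
  have hc : c ∈ Icc c d := left_mem_Icc.mpr (hy.1.trans hy.2)
  have hd : d ∈ Icc c d := right_mem_Icc.mpr (hy.1.trans hy.2)
  have hv := h.intervalIntegrable_v.of_mem_Icc hc hy
  have hg := h.intervalIntegrable_rhs.of_mem_Icc hc hy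
  have hkw : IntervalIntegrable (fun z => (1 + |p z| + |q z|) * (|u z| + |v z|)) volume c d :=
    ((((integrableOn_const measure_Icc_lt_top.ne).add hp.abs).add hq.abs).mul_continuousOn
      (h.continuousOn_u.abs.add h.continuousOn_v.abs) isCompact_Icc).intervalIntegrable_of_mem_Icc
      hc hd
  have hu : |u y| ≤ |u c| + ∫ z in c..y, |v z| := by
    rw [h.eq_u y hy]
    exact (abs_add_le _ _).trans (by gcongr; exact abs_integral_le_integral_abs hy.1)
  have hv' : |v y| ≤ |v c| + ∫ z in c..y, |q z * u z - p z * v z| := by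
    rw [h.eq_v y hy]
    exact (abs_add_le _ _).trans (by gcongr; exact abs_integral_le_integral_abs hy.1)
  have hint : (∫ z in c..y, |v z|) + ∫ z in c..y, |q z * u z - p z * v z| ≤
      ∫ z in c..d, (1 + |p z| + |q z|) * (|u z| + |v z|) := by
    rw [← integral_add hv.abs hg.abs]
    refine (integral_mono_on hy.1 (hv.abs.add hg.abs) (hkw.of_mem_Icc hc hy) fun z _ => ?_).trans
      (integral_mono_interval le_rfl hy.1 hy.2
        (Filter.Eventually.of_forall fun z => by positivity) hkw)
    calc |v z| + |q z * u z - p z * v z| ≤ |v z| + (|q z| * |u z| + |p z| * |v z|) := by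
          rw [← abs_mul, ← abs_mul]; gcongr; exact abs_sub _ _
      _ ≤ (1 + |p z| + |q z|) * (|u z| + |v z|) := by
          nlinarith [abs_nonneg (u z), abs_nonneg (v z), abs_nonneg (p z), abs_nonneg (q z)]
  linarith

theorem wronskian_eq {u₁ v₁ u₂ v₂ : ℝ → ℝ} (h₁ : IsSolutionOn p q u₁ v₁ c d)
    (h₂ : IsSolutionOn p q u₂ v₂ c d) :
    ∀ y ∈ Icc c d, u₁ y * v₂ y - v₁ y * u₂ y =
      (u₁ c * v₂ c - v₁ c * u₂ c) - ∫ z in c..y, p z * (u₁ z * v₂ z - v₁ z * u₂ z) := by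
  intro y hy
  have hc : c ∈ Icc c d := ⟨le_rfl, hy.1.trans hy.2⟩
  have hsub : Icc c y ⊆ Icc c d := Icc_subset_Icc le_rfl hy.2
  have hcont : uIcc c y ⊆ Icc c d := uIcc_of_le hy.1 ▸ hsub
  have hv₁ := h₁.intervalIntegrable_v.of_mem_Icc hc hy
  have hv₂ := h₂.intervalIntegrable_v.of_mem_Icc hc hy
  have hg₁ := h₁.intervalIntegrable_rhs.of_mem_Icc hc hy
  have hg₂ := h₂.intervalIntegrable_rhs.of_mem_Icc hc hy
  have huv := mul_eq_add_integral hy.1 hv₁ hg₂ (fun t ht => h₁.eq_u t (hsub ht))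
    (fun t ht => h₂.eq_v t (hsub ht))
  have hvu := mul_eq_add_integral hy.1 hg₁ hv₂ (fun t ht => h₁.eq_v t (hsub ht))
    (fun t ht => h₂.eq_u t (hsub ht))
  rw [huv, hvu, add_sub_add_comm, ← intervalIntegral.integral_sub,
    sub_eq_add_neg _ (∫ z in c..y, _), ← intervalIntegral.integral_neg]
  · congr 1
    refine integral_congr fun z _ => ?_
    ring
  · exact (hv₁.mul_continuousOn (h₂.continuousOn_v.mono hcont)).add
      (hg₂.continuousOn_mul (h₁.continuousOn_u.mono hcont))
  · exact (hg₁.mul_continuousOn (h₂.continuousOn_u.mono hcont)).add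
      (hv₂.continuousOn_mul (h₁.continuousOn_v.mono hcont))

end IsSolutionOn

section Regularity

variable {p q u v : ℝ → ℝ} {c d : ℝ}

theorem isSolutionOn_of_intervalIntegrable (hcd : c ≤ d)
    (hu : ∀ y ∈ Icc c d, u y = ∫ z in c..y, v z)
    (hv : ∀ y ∈ Icc c d, v y = 1 + ∫ z in c..y, (q z * u z - p z * v z))
    (hg : IntervalIntegrable (fun z => q z * u z - p z * v z) volume c d) :
    IsSolutionOn p q u v c d := by
  have hc : c ∈ Icc c d := left_mem_Icc.mpr hcd
  have huc : u c = 0 := by rw [hu c hc, integral_same]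
  have hvc : v c = 1 := by rw [hv c hc, integral_same, add_zero]
  refine ⟨(continuousOn_of_eq_add_integral hg hv).intervalIntegrable_of_Icc hcd, hg, ?_, ?_⟩
  · simpa only [huc, zero_add] using hu
  · simpa only [hvc] using hv

theorem exists_bound_of_forall_isSolutionOn (hp : IntegrableOn p (Icc c d))
    (hq : IntegrableOn q (Icc c d)) (h : ∀ e ∈ Ico c d, IsSolutionOn p q u v c e) :
    ∃ M, ∀ t ∈ Ico c d, |u t| + |v t| ≤ M := by
  rcases le_or_gt d c with hdc | hcd
  · exact ⟨0, fun t ht => absurd (ht.1.trans_lt ht.2) hdc.not_gt⟩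
  have hk : IntegrableOn (fun z => 1 + |p z| + |q z|) (Icc c d) :=
    ((integrableOn_const measure_Icc_lt_top.ne).add hp.abs).add hq.abs
  obtain ⟨s, hs, hks⟩ := exists_integral_lt hcd hk one_half_pos
  obtain ⟨B, hB⟩ := isCompact_Icc.exists_bound_of_continuousOn
    ((h s hs).continuousOn_u.abs.add (h s hs).continuousOn_v.abs)
  refine ⟨max B (2 * (|u s| + |v s|)), fun t ht => ?_⟩
  rcases le_or_gt t s with hts | hst
  · exact ((le_abs_self _).trans (hB t ⟨ht.1, hts⟩)).trans (le_max_left _ _)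
  have hsub : Icc s t ⊆ Icc c d := Icc_subset_Icc hs.1 ht.2.le
  have hsol := (h t ht).mono hs.1 hst.le le_rfl
  have hks' : ∫ z in s..t, (1 + |p z| + |q z|) ≤ 1 / 2 :=
    (integral_mono_interval le_rfl hst.le ht.2.le
      (Filter.Eventually.of_forall fun z => by positivity)
      (hk.intervalIntegrable_of_mem_Icc ⟨hs.1, hs.2.le⟩ (right_mem_Icc.mpr hcd.le))).trans hks.le
  refine (le_two_mul_of_le_add_integral (hsol.continuousOn_u.abs.fun_add hsol.continuousOn_v.abs)
    (fun _ _ => by positivity) (hk.mono_set hsub) (fun _ _ => by positivity) hks'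
    (hsol.abs_add_abs_le (hp.mono_set hsub) (hq.mono_set hsub)) t
    ⟨hst.le, le_rfl⟩).trans (le_max_right _ _)

theorem intervalIntegrable_rhs_of_forall_isSolutionOn (hcd : c ≤ d)
    (hp : IntegrableOn p (Icc c d)) (hq : IntegrableOn q (Icc c d))
    (h : ∀ e ∈ Ico c d, IsSolutionOn p q u v c e) :
    IntervalIntegrable (fun z => q z * u z - p z * v z) volume c d := by
  obtain ⟨M, hM⟩ := exists_bound_of_forall_isSolutionOn hp hq h
  have hu := continuousOn_Ico_of_forall_continuousOn_Icc fun e he => (h e he).continuousOn_u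
  have hv := continuousOn_Ico_of_forall_continuousOn_Icc fun e he => (h e he).continuousOn_v
  have hbound : IntegrableOn (fun z => (|q z| + |p z|) * M) (Ico c d) :=
    IntegrableOn.mono_set ((hq.abs.add hp.abs).mul_const M) Ico_subset_Icc_self
  have hg : IntegrableOn (fun z => q z * u z - p z * v z) (Ico c d) := by
    refine hbound.mono' ?_ ((ae_restrict_iff' measurableSet_Ico).mpr
      (Filter.Eventually.of_forall fun z hz => ?_))
    · exact ((hq.mono_set Ico_subset_Icc_self).aestronglyMeasurable.mul
        (hu.aestronglyMeasurable measurableSet_Ico)).sub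
        ((hp.mono_set Ico_subset_Icc_self).aestronglyMeasurable.mul
        (hv.aestronglyMeasurable measurableSet_Ico))
    · have := hM z hz
      rw [Real.norm_eq_abs]
      calc |q z * u z - p z * v z| ≤ |q z| * |u z| + |p z| * |v z| := by
            rw [← abs_mul, ← abs_mul]; exact abs_sub _ _
        _ ≤ (|q z| + |p z|) * M := by
            nlinarith [abs_nonneg (u z), abs_nonneg (v z), abs_nonneg (p z), abs_nonneg (q z)]
  rw [intervalIntegrable_iff_integrableOn_Icc_of_le hcd, integrableOn_Icc_iff_integrableOn_Ico]
  exact hg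

theorem intervalIntegrable_rhs_of_eq_one {e : ℝ} (hce : c ≤ e) (hed : e ≤ d)
    (hp : IntegrableOn p (Icc c d)) (hq : IntegrableOn q (Icc c d))
    (hu : ∀ y ∈ Icc c d, u y = ∫ z in c..y, v z) (hsol : IsSolutionOn p q u v c e)
    (hv : ∀ y ∈ Ioc e d, v y = 1) :
    IntervalIntegrable (fun z => q z * u z - p z * v z) volume c d := by
  have he : e ∈ Icc c d := ⟨hce, hed⟩
  have hd : d ∈ Icc c d := ⟨hce.trans hed, le_rfl⟩
  have hv' : IntervalIntegrable v volume c d :=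
    hsol.intervalIntegrable_v.trans <| intervalIntegrable_const.congr <| by
      rw [uIoc_of_le hed]; exact fun y hy => (hv y hy).symm
  have hucont : ContinuousOn u (Icc c d) :=
    continuousOn_of_eq_add_integral (C := 0) hv' (by simpa only [zero_add] using hu)
  refine hsol.intervalIntegrable_rhs.trans <|
    (((hq.mul_continuousOn hucont isCompact_Icc).intervalIntegrable_of_mem_Icc he hd).sub
      (hp.intervalIntegrable_of_mem_Icc he hd)).congr ?_
  rw [uIoc_of_le hed]
  intro y hy
  simp only [hv y hy, mul_one]

theorem isSolutionOn_of_integral_eq (hcd : c ≤ d)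
    (hp : IntegrableOn p (Icc c d)) (hq : IntegrableOn q (Icc c d))
    (hu : ∀ y ∈ Icc c d, u y = ∫ z in c..y, v z)
    (hv : ∀ y ∈ Icc c d, v y = 1 + ∫ z in c..y, (q z * u z - p z * v z)) :
    IsSolutionOn p q u v c d := by
  set S := {e ∈ Icc c d | IntervalIntegrable (fun z => q z * u z - p z * v z) volume c e}
  have hsol : ∀ e ∈ S, IsSolutionOn p q u v c e := fun e he =>
    isSolutionOn_of_intervalIntegrable he.1.1 (fun y hy => hu y ⟨hy.1, hy.2.trans he.1.2⟩)
      (fun y hy => hv y ⟨hy.1, hy.2.trans he.1.2⟩) he.2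
  have hcS : c ∈ S := ⟨left_mem_Icc.mpr hcd, IntervalIntegrable.refl⟩
  have hS : BddAbove S := ⟨d, fun e he => he.1.2⟩
  set e := sSup S
  have hce : c ≤ e := le_csSup hS hcS
  have hed : e ≤ d := csSup_le ⟨c, hcS⟩ fun e he => he.1.2
  have heS : e ∈ S := by
    refine ⟨⟨hce, hed⟩, intervalIntegrable_rhs_of_forall_isSolutionOn hce
      (hp.mono_set (Icc_subset_Icc le_rfl hed)) (hq.mono_set (Icc_subset_Icc le_rfl hed))
      fun t ht => hsol t ?_⟩
    obtain ⟨t', ht', htt'⟩ := exists_lt_of_lt_csSup ⟨c, hcS⟩ ht.2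
    exact ⟨⟨ht.1, ht.2.le.trans hed⟩,
      ht'.2.of_mem_Icc (left_mem_Icc.mpr ht'.1.1) ⟨ht.1, htt'.le⟩⟩
  refine hsol d ⟨right_mem_Icc.mpr hcd,
    intervalIntegrable_rhs_of_eq_one hce hed hp hq hu (hsol e heS) fun y hy => ?_⟩
  -- past `e` the integrand is not integrable, so the integral in `hv` is the junk value `0`
  have hy' : y ∈ Icc c d := ⟨hce.trans hy.1.le, hy.2⟩
  have hyS : ¬IntervalIntegrable (fun z => q z * u z - p z * v z) volume c y :=
    fun h => (le_csSup hS ⟨hy', h⟩).not_gt hy.1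
  rw [hv y hy', integral_undef hyS, add_zero]

end Regularity

theorem pos_of_eq_sub_integral_mul {p W : ℝ → ℝ} {c d : ℝ} (hp : IntegrableOn p (Icc c d))
    (hW : ContinuousOn W (Icc c d)) (hWc : 0 < W c)
    (heq : ∀ y ∈ Icc c d, W y = W c - ∫ z in c..y, p z * W z) : ∀ y ∈ Icc c d, 0 < W y := by
  intro y hy
  by_contra! hWy
  set Z := Icc c d ∩ W ⁻¹' {0}
  have hZ : Z.Nonempty := by
    obtain ⟨z, hz, hWz⟩ :=
      intermediate_value_Icc' hy.1 (hW.mono (Icc_subset_Icc le_rfl hy.2)) ⟨hWy, hWc.le⟩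
    exact ⟨z, ⟨hz.1, hz.2.trans hy.2⟩, hWz⟩
  have hZb : BddBelow Z := ⟨c, fun z hz => hz.1.1⟩
  have hz₀ : sInf Z ∈ Z :=
    (hW.preimage_isClosed_of_isClosed isClosed_Icc isClosed_singleton).csInf_mem hZ hZb
  set z₀ := sInf Z
  have hcz₀ : c < z₀ := hz₀.1.1.lt_of_ne fun h => by
    have : W z₀ = 0 := hz₀.2
    rw [← h] at this; linarith
  have hc : c ∈ Icc c d := ⟨le_rfl, hy.1.trans hy.2⟩
  have hsub : Icc c z₀ ⊆ Icc c d := Icc_subset_Icc le_rfl hz₀.1.2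
  have hpW : IntegrableOn (fun z => p z * W z) (Icc c d) := hp.mul_continuousOn hW isCompact_Icc
  -- just before the first zero `z₀` the equation is a contraction, which forces `W = 0` there
  obtain ⟨t, ht, hpt⟩ := exists_integral_lt hcz₀ (hp.mono_set hsub).abs one_half_pos
  have hsub' : Icc t z₀ ⊆ Icc c d := (Icc_subset_Icc ht.1 le_rfl).trans hsub
  have hbound : ∀ s ∈ Icc t z₀, |W s| ≤ 0 + ∫ z in t..z₀, |p z| * |W z| := by
    intro s hs
    have hs' := hsub' hs
    have hWs : W s = ∫ z in s..z₀, p z * W z := by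
      rw [← integral_interval_sub_left (hpW.intervalIntegrable_of_mem_Icc hc hz₀.1)
        (hpW.intervalIntegrable_of_mem_Icc hc hs'), ← sub_zero (W s),
        ← show W z₀ = 0 from hz₀.2, heq s hs', heq z₀ hz₀.1]
      ring
    rw [hWs, zero_add]
    refine (abs_integral_le_integral_abs hs.2).trans ?_
    simp only [abs_mul]
    exact integral_mono_interval hs.1 hs.2 le_rfl
      (Filter.Eventually.of_forall fun z => by positivity)
      ((hpW.intervalIntegrable_of_mem_Icc (hsub' (left_mem_Icc.mpr (hs.1.trans hs.2)))
        hz₀.1).abs.congr fun z _ => abs_mul _ _)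
  have hWt := le_two_mul_of_le_add_integral (hW.mono hsub').abs (fun _ _ => abs_nonneg _)
    (hp.mono_set hsub').abs (fun _ _ => abs_nonneg _) hpt.le hbound t ⟨le_rfl, ht.2.le⟩
  have htZ : t ∈ Z := ⟨hsub' ⟨le_rfl, ht.2.le⟩, abs_nonpos_iff.mp (by simpa using hWt)⟩
  exact (csInf_le hZb htZ).not_gt ht.2

theorem exists_strictMonoOn_of_pos {u v : ℝ → ℝ} {c d z : ℝ} (hv : ContinuousOn v (Icc c d))
    (hu : ∀ y ∈ Icc c d, u y = ∫ x in c..y, v x) (hz : z ∈ Icc c d) (hvz : 0 < v z) :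
    ∃ δ > 0, StrictMonoOn u (Icc c d ∩ Ioo (z - δ) (z + δ)) := by
  obtain ⟨δ, hδ, hball⟩ := Metric.mem_nhdsWithin_iff.mp
    ((hv z hz).eventually (lt_mem_nhds hvz))
  refine ⟨δ, hδ, fun y₁ hy₁ y₂ hy₂ hlt => ?_⟩
  have hcd : c ≤ d := hz.1.trans hz.2
  have hc : c ∈ Icc c d := left_mem_Icc.mpr hcd
  have hvi := hv.intervalIntegrable_of_Icc (μ := volume) hcd
  have hpos : 0 < ∫ x in y₁..y₂, v x := by
    refine intervalIntegral_pos_of_pos_on (hvi.of_mem_Icc hy₁.1 hy₂.1) (fun x hx => ?_) hlt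
    refine hball ⟨?_, hy₁.1.1.trans hx.1.le, hx.2.le.trans hy₂.1.2⟩
    rw [Real.ball_eq_Ioo]
    exact ⟨hy₁.2.1.trans hx.1, hx.2.trans hy₂.2.2⟩
  rw [hu y₁ hy₁.1, hu y₂ hy₂.1, ← sub_pos,
    integral_interval_sub_left (hvi.of_mem_Icc hc hy₂.1) (hvi.of_mem_Icc hc hy₁.1)]
  exact hpos

theorem pos_of_pos_at_zeros {u v : ℝ → ℝ} {c d : ℝ} (hv : ContinuousOn v (Icc c d))
    (hu : ∀ y ∈ Icc c d, u y = ∫ x in c..y, v x) (hzero : ∀ y ∈ Icc c d, u y = 0 → 0 < v y) :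
    ∀ y ∈ Ioc c d, 0 < u y := by
  intro y hy
  by_contra! huy
  have hc : c ∈ Icc c d := ⟨le_rfl, hy.1.le.trans hy.2⟩
  have huc : u c = 0 := by rw [hu c hc, integral_same]
  have hucont : ContinuousOn u (Icc c d) :=
    continuousOn_of_eq_add_integral (C := 0) (hv.intervalIntegrable_of_Icc hc.2)
      (by simpa only [zero_add] using hu)
  obtain ⟨δ, hδ, hmono⟩ := exists_strictMonoOn_of_pos hv hu hc (hzero c hc huc)
  set t := min (c + δ / 2) y
  have hct : c < t := lt_min (by linarith) hy.1
  have hty : t ≤ y := min_le_right _ _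
  have hut : 0 < u t := huc ▸ hmono ⟨hc, by linarith, by linarith⟩
    ⟨⟨hct.le, hty.trans hy.2⟩, by linarith, by linarith [min_le_left (c + δ / 2) y]⟩ hct
  set Z := Icc t y ∩ u ⁻¹' Iic 0
  have hZb : BddBelow Z := ⟨t, fun z hz => hz.1.1⟩
  have hsub : Icc t y ⊆ Icc c d := Icc_subset_Icc hct.le hy.2
  have hz₀ : sInf Z ∈ Z := ((hucont.mono hsub).preimage_isClosed_of_isClosed isClosed_Icc
    isClosed_Iic).csInf_mem ⟨y, ⟨hty, le_rfl⟩, huy⟩ hZb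
  set z₀ := sInf Z
  have htz₀ : t < z₀ := hz₀.1.1.lt_of_ne fun h => by
    have : u z₀ ≤ 0 := hz₀.2
    rw [← h] at this; linarith
  have hpos_before : ∀ s ∈ Ico t z₀, 0 < u s := fun s hs => by
    by_contra! hus
    exact (csInf_le hZb ⟨⟨hs.1, hs.2.le.trans hz₀.1.2⟩, hus⟩).not_gt hs.2
  have huz₀ : u z₀ = 0 := by
    obtain ⟨s, hs, hus⟩ := intermediate_value_Icc' htz₀.le (hucont.mono
      ((Icc_subset_Icc le_rfl hz₀.1.2).trans hsub)) ⟨hz₀.2, hut.le⟩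
    rcases hs.2.lt_or_eq with hlt | rfl
    · exact absurd hus (hpos_before s ⟨hs.1, hlt⟩).ne'
    · exact hus
  have hz₀' := hsub hz₀.1
  obtain ⟨δ', hδ', hmono'⟩ := exists_strictMonoOn_of_pos hv hu hz₀' (hzero z₀ hz₀' huz₀)
  set s := max (z₀ - δ' / 2) t
  have hsz₀ : s < z₀ := max_lt (by linarith) htz₀
  have hts : t ≤ s := le_max_right _ _
  have hus : u s < 0 := huz₀ ▸ hmono' ⟨hsub ⟨hts, hsz₀.le.trans hz₀.1.2⟩,
    by linarith [le_max_left (z₀ - δ' / 2) t], by linarith⟩ ⟨hz₀', by linarith, by linarith⟩ hsz₀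
  exact absurd hus (hpos_before s ⟨hts, hsz₀⟩).le.not_gt

theorem nonneg_of_pos_on_Ioo {f : ℝ → ℝ} {a b : ℝ} (hab : a < b)
    (hf : ContinuousOn f (Icc a b)) (hpos : ∀ x ∈ Ioo a b, 0 < f x) :
    ∀ x ∈ Icc a b, 0 ≤ f x := by
  have := closure_minimal (fun y hy => ⟨Ioo_subset_Icc_self hy, (hpos y hy).le⟩ :
      Ioo a b ⊆ Icc a b ∩ f ⁻¹' Ici 0)
    (hf.preimage_isClosed_of_isClosed isClosed_Icc isClosed_Ici)
  rw [closure_Ioo hab.ne] at this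
  exact fun x hx => (this hx).2

theorem stmt_2_general
    (I : Set ℝ) (hIconn : I.OrdConnected)
    (α r σ : ℝ → ℝ)
    (hint2 : MeasureTheory.LocallyIntegrableOn (fun z => α z / (σ z) ^ 2) I)
    (hint3 : MeasureTheory.LocallyIntegrableOn (fun z => r z / (σ z) ^ 2) I)
    (φ12 φ22 : ℝ → ℝ → ℝ)
    (hφ12 : ∀ x ∈ I, ∀ y ∈ I, φ12 x y = ∫ z in x..y, φ22 x z)
    (hφ22 : ∀ x ∈ I, ∀ y ∈ I, φ22 x y = 1 +
      ∫ z in x..y, (2 * r z / (σ z) ^ 2 * φ12 x z - 2 * α z / (σ z) ^ 2 * φ22 x z))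
    (a b : ℝ) (ha : a ∈ I) (hb : b ∈ I) (hab : a < b)
    (hpos : ∀ x ∈ Set.Ioo a b, 0 < φ12 a x) :
    ∀ x ∈ Set.Ioo a b, 0 < φ12 x b := by
  intro x hx
  have hI : Icc a b ⊆ I := hIconn.out ha hb
  have hxb : Icc x b ⊆ Icc a b := Icc_subset_Icc hx.1.le le_rfl
  have hxI : x ∈ I := hI (Ioo_subset_Icc_self hx)
  have hp : IntegrableOn (fun z => 2 * α z / σ z ^ 2) (Icc a b) := by
    simp only [mul_div_assoc]; exact (hint2.integrableOn_compact_subset hI isCompact_Icc).const_mul 2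
  have hq : IntegrableOn (fun z => 2 * r z / σ z ^ 2) (Icc a b) := by
    simp only [mul_div_assoc]; exact (hint3.integrableOn_compact_subset hI isCompact_Icc).const_mul 2
  have hu : ∀ y ∈ Icc x b, φ12 x y = ∫ z in x..y, φ22 x z := fun y hy => hφ12 x hxI y (hI (hxb hy))
  have hsol_a := isSolutionOn_of_integral_eq hab.le hp hq (fun y hy => hφ12 a ha y (hI hy))
    (fun y hy => hφ22 a ha y (hI hy))
  have hsol_x := isSolutionOn_of_integral_eq hx.2.le (hp.mono_set hxb) (hq.mono_set hxb) hu
    (fun y hy => hφ22 x hxI y (hI (hxb hy)))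
  have hW := pos_of_eq_sub_integral_mul (hp.mono_set hxb)
    (((hsol_a.continuousOn_u.mono hxb).fun_mul hsol_x.continuousOn_v).fun_sub
      ((hsol_a.continuousOn_v.mono hxb).fun_mul hsol_x.continuousOn_u))
    (by simpa [hu x (left_mem_Icc.mpr hx.2.le), hφ22 x hxI x hxI] using hpos x hx)
    ((hsol_a.mono hx.1.le hx.2.le le_rfl).wronskian_eq hsol_x)
  refine pos_of_pos_at_zeros hsol_x.continuousOn_v hu (fun y hy hy0 => ?_) b ⟨hx.2, le_rfl⟩
  have := hW y hy
  rw [hy0, mul_zero, sub_zero] at this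
  exact pos_of_mul_pos_right this
    (nonneg_of_pos_on_Ioo hab hsol_a.continuousOn_u hpos y (hxb hy))

/-- Lemma "sign φ₁₂" (c): if x ↦ φ₁₂(a,x) is strictly positive on (a,b),
then x ↦ φ₁₂(x,b) is strictly positive on (a,b). -/
theorem stmt_2
    (I : Set ℝ) (hI : IsOpen I) (hIconn : I.OrdConnected)
    (α r σ : ℝ → ℝ)
    (hmα : Measurable α) (hmr : Measurable r) (hmσ : Measurable σ)
    (hσpos : ∀ x ∈ I, 0 < σ x)
    (hint1 : MeasureTheory.LocallyIntegrableOn (fun z => 1 / (σ z) ^ 2) I)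
    (hint2 : MeasureTheory.LocallyIntegrableOn (fun z => α z / (σ z) ^ 2) I)
    (hint3 : MeasureTheory.LocallyIntegrableOn (fun z => r z / (σ z) ^ 2) I)
    (φ11 φ12 φ21 φ22 : ℝ → ℝ → ℝ)
    (hφ11 : ∀ x ∈ I, ∀ y ∈ I, φ11 x y = 1 + ∫ z in x..y, φ21 x z)
    (hφ12 : ∀ x ∈ I, ∀ y ∈ I, φ12 x y = ∫ z in x..y, φ22 x z)
    (hφ21 : ∀ x ∈ I, ∀ y ∈ I, φ21 x y =
      ∫ z in x..y, (2 * r z / (σ z) ^ 2 * φ11 x z - 2 * α z / (σ z) ^ 2 * φ21 x z))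
    (hφ22 : ∀ x ∈ I, ∀ y ∈ I, φ22 x y = 1 +
      ∫ z in x..y, (2 * r z / (σ z) ^ 2 * φ12 x z - 2 * α z / (σ z) ^ 2 * φ22 x z))
    (a b : ℝ) (ha : a ∈ I) (hb : b ∈ I) (hab : a < b)
    (hpos : ∀ x ∈ Set.Ioo a b, 0 < φ12 a x) :
    ∀ x ∈ Set.Ioo a b, 0 < φ12 x b :=
  stmt_2_general I hIconn α r σ hint2 hint3 φ12 φ22 hφ12 hφ22 a b ha hb hab hpos
end

section
/- In the geometric Brownian motion case with distinct real exponents d₁ < d₂, for a ∈ (0,∞) define v_{a,0}(x) = (−2/(σ²(d₂−d₁))) ∫ₐˣ ((x/z)^{d₂} − (x/z)^{d₁}) Π(z)/z dz. Then v_{a,0} is a Carathéodory solution of r v − αx v' − (σ²/2)x² v'' − Π = 0 on (0,∞) with v_{a,0}(a) = 0 and v'_{a,0}(a) = 0, where α = (σ²/2)(1−d₁−d₂), r = −(σ²/2)d₁d₂. -/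
/-!
With `G p x = weightedPrimitive Π a p x = ∫ₐˣ Π(z) z^(-p-1) dz` one has
`v = C (x^d₂ G d₂ - x^d₁ G d₁)`, `C = -2/(σ²(d₂-d₁))`. The primitives `G p` are only absolutely
continuous, so instead of differentiating them we integrate by parts against the smooth factors
`x^p`. This shows that `w = C (d₂ x^(d₂-1) G d₂ - d₁ x^(d₁-1) G d₁)` integrates to `v` (the
`Π(z)/z` terms of the two exponents cancel), and that `w` is the integral of the right-hand side
of the ODE, which reduces to a combination of `x^(p-2) G p` and `Π/x²` because `d₁, d₂` are the
roots of `(σ²/2) d² + (α - σ²/2) d - r`.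
-/

open MeasureTheory Set intervalIntegral

theorem AbsolutelyContinuousOnInterval.integral_deriv_mul_primitive {φ h : ℝ → ℝ} {c d : ℝ}
    (hφ : AbsolutelyContinuousOnInterval φ c d) (hh : IntervalIntegrable h volume c d) :
    ∫ t in c..d, deriv φ t * ∫ z in c..t, h z
      = φ d * (∫ z in c..d, h z) - ∫ z in c..d, φ z * h z := by
  have hH := hh.absolutelyContinuousOnInterval_intervalIntegral left_mem_uIcc
  have hderiv : ∫ z in c..d, φ z * deriv (fun t => ∫ z in c..t, h z) z
      = ∫ z in c..d, φ z * h z := by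
    refine integral_congr_ae ?_
    filter_upwards [hh.ae_hasDerivAt_integral] with z hz hzcd
    rw [(hz (uIoc_subset_uIcc hzcd) c left_mem_uIcc).deriv]
  have := hφ.integral_mul_deriv_eq_deriv_mul hH
  rw [hderiv, integral_same, mul_zero, sub_zero] at this
  linarith

lemma pos_of_mem_uIcc {a x z : ℝ} (ha : 0 < a) (hx : 0 < x) (hz : z ∈ uIcc a x) : 0 < z :=
  (lt_min ha hx).trans_le hz.1

theorem integral_rpow_deriv_mul_primitive {h : ℝ → ℝ} {c d : ℝ} (p : ℝ) (hc : 0 < c) (hd : 0 < d)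
    (hh : IntervalIntegrable h volume c d) :
    ∫ t in c..d, p * t ^ (p - 1) * ∫ z in c..t, h z
      = d ^ p * (∫ z in c..d, h z) - ∫ z in c..d, z ^ p * h z := by
  have hφ : AbsolutelyContinuousOnInterval (fun t : ℝ => t ^ p) c d :=
    (contDiffOn_id.rpow_const_of_ne fun t ht =>
      (pos_of_mem_uIcc hc hd ht).ne').absolutelyContinuousOnInterval
  simp only [← Real.deriv_rpow_const]
  exact hφ.integral_deriv_mul_primitive hh

theorem div_rpow_mul_div_eq {x z : ℝ} (hx : 0 < x) (hz : 0 < z) (p P : ℝ) :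
    (x / z) ^ p * P / z = x ^ p * (P * z ^ (-p - 1)) := by
  rw [Real.div_rpow hx.le hz.le, sub_eq_add_neg, Real.rpow_add hz, Real.rpow_neg hz.le,
    Real.rpow_neg_one]
  field_simp

section WeightedPrimitive

variable {P : ℝ → ℝ} {a x : ℝ}

noncomputable def weightedPrimitive (P : ℝ → ℝ) (a p x : ℝ) : ℝ :=
  ∫ z in a..x, P z * z ^ (-p - 1)

theorem intervalIntegrable_mul_rpow (hP : LocallyIntegrableOn (fun z => P z / z ^ 2) (Ioi 0))
    (ha : 0 < a) (hx : 0 < x) (e : ℝ) :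
    IntervalIntegrable (fun z => P z * z ^ e) volume a x := by
  have hsub : uIcc a x ⊆ Ioi 0 := fun z hz => pos_of_mem_uIcc ha hx hz
  have hcont : ContinuousOn (fun z : ℝ => z ^ (e + 2)) (uIcc a x) :=
    continuousOn_id.rpow_const fun z hz => Or.inl (hsub hz).ne'
  refine (((hP.integrableOn_compact_subset hsub isCompact_uIcc).mul_continuousOn hcont
    isCompact_uIcc).congr_fun (fun z hz => ?_) measurableSet_uIcc).intervalIntegrable
  have hz : 0 < z := hsub hz
  rw [Real.rpow_add hz, Real.rpow_two]
  field_simp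

theorem integral_rpow_div_sub_rpow_div_mul_div
    (hP : LocallyIntegrableOn (fun z => P z / z ^ 2) (Ioi 0)) (ha : 0 < a) (hx : 0 < x)
    (d1 d2 : ℝ) :
    ∫ z in a..x, ((x / z) ^ d2 - (x / z) ^ d1) * P z / z
      = x ^ d2 * weightedPrimitive P a d2 x - x ^ d1 * weightedPrimitive P a d1 x := by
  have hpt : EqOn (fun z => ((x / z) ^ d2 - (x / z) ^ d1) * P z / z)
      (fun z => x ^ d2 * (P z * z ^ (-d2 - 1)) - x ^ d1 * (P z * z ^ (-d1 - 1)))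
      (uIcc a x) := fun z hz => by
    simp only [sub_mul, sub_div, div_rpow_mul_div_eq hx (pos_of_mem_uIcc ha hx hz)]
  rw [integral_congr hpt, integral_sub ((intervalIntegrable_mul_rpow hP ha hx _).const_mul _)
    ((intervalIntegrable_mul_rpow hP ha hx _).const_mul _), intervalIntegral.integral_const_mul,
    intervalIntegral.integral_const_mul, weightedPrimitive, weightedPrimitive]

theorem intervalIntegrable_rpow_deriv_mul_weightedPrimitive
    (hP : LocallyIntegrableOn (fun z => P z / z ^ 2) (Ioi 0)) (ha : 0 < a) (hx : 0 < x)
    (p q : ℝ) :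
    IntervalIntegrable (fun t => p * t ^ (p - 1) * weightedPrimitive P a q t) volume a x := by
  refine ContinuousOn.intervalIntegrable ?_
  exact (continuousOn_const.mul (continuousOn_id.rpow_const fun t ht =>
    Or.inl (pos_of_mem_uIcc ha hx ht).ne')).mul
    ((intervalIntegrable_mul_rpow hP ha hx _).absolutelyContinuousOnInterval_intervalIntegral
      left_mem_uIcc).continuousOn

theorem integral_rpow_deriv_mul_weightedPrimitive
    (hP : LocallyIntegrableOn (fun z => P z / z ^ 2) (Ioi 0)) (ha : 0 < a) (hx : 0 < x)
    {p q e : ℝ} (he : p - q - 1 = e) :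
    ∫ t in a..x, p * t ^ (p - 1) * weightedPrimitive P a q t
      = x ^ p * weightedPrimitive P a q x - ∫ z in a..x, P z * z ^ e := by
  simp only [weightedPrimitive]
  rw [integral_rpow_deriv_mul_primitive p ha hx (intervalIntegrable_mul_rpow hP ha hx _)]
  congr 1
  refine integral_congr fun z hz => ?_
  simp only [← he, ← mul_assoc, mul_comm _ (P z), mul_assoc (P z),
    ← Real.rpow_add (pos_of_mem_uIcc ha hx hz)]
  ring_nf

end WeightedPrimitive

theorem gbm_ode_integrand_eq {d1 d2 σ C t g1 g2 P : ℝ} (hσ : σ ≠ 0)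
    (hC : C * (σ ^ 2 * (d2 - d1)) = -2) (ht : 0 < t) :
    2 / (σ ^ 2 * t ^ 2) *
        (-(σ ^ 2 / 2) * (d1 * d2) * (C * (t ^ d2 * g2 - t ^ d1 * g1))
          - σ ^ 2 / 2 * (1 - d1 - d2) * t * (C * (d2 * t ^ (d2 - 1) * g2 - d1 * t ^ (d1 - 1) * g1))
          - P)
      = C * d2 * ((d2 - 1) * t ^ (d2 - 1 - 1) * g2) - C * d1 * ((d1 - 1) * t ^ (d1 - 1 - 1) * g1)
        + C * (d2 - d1) * (P * t ^ (-2 : ℝ)) := by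
  have hpow : ∀ p : ℝ, t ^ p = t ^ (p - 1 - 1) * t ^ 2 ∧ t ^ (p - 1) = t ^ (p - 1 - 1) * t := by
    intro p
    constructor
    · rw [← Real.rpow_natCast, ← Real.rpow_add ht]; ring_nf
    · rw [← Real.rpow_add_one ht.ne']; norm_num
  rw [(hpow d2).1, (hpow d2).2, (hpow d1).1, (hpow d1).2, Real.rpow_neg ht.le, Real.rpow_two]
  field_simp
  linear_combination (-P) * hC

theorem stmt_10_general (d1 d2 σ a : ℝ) (hd : d1 < d2) (hσ : 0 < σ) (ha : 0 < a)
    (Prof : ℝ → ℝ)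
    (hPint : MeasureTheory.LocallyIntegrableOn (fun z => Prof z / z ^ 2) (Set.Ioi 0))
    (v : ℝ → ℝ)
    (hv : ∀ x : ℝ, v x =
      -2 / (σ ^ 2 * (d2 - d1)) *
        ∫ z in a..x, ((x / z) ^ d2 - (x / z) ^ d1) * Prof z / z) :
    v a = 0 ∧
    ∃ w : ℝ → ℝ, w a = 0 ∧
      (∀ x ∈ Set.Ioi (0 : ℝ), v x = ∫ t in a..x, w t) ∧
      (∀ x ∈ Set.Ioi (0 : ℝ), w x =
        ∫ t in a..x, 2 / (σ ^ 2 * t ^ 2) *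
          (-(σ ^ 2 / 2) * (d1 * d2) * v t
            - σ ^ 2 / 2 * (1 - d1 - d2) * t * w t - Prof t)) := by
  set C := -2 / (σ ^ 2 * (d2 - d1))
  have hC : C * (σ ^ 2 * (d2 - d1)) = -2 :=
    div_mul_cancel₀ _ (mul_pos (pow_pos hσ 2) (sub_pos.2 hd)).ne'
  set G := weightedPrimitive Prof a
  have hvG : ∀ x, 0 < x → v x = C * (x ^ d2 * G d2 x - x ^ d1 * G d1 x) := fun x hx => by
    rw [hv, integral_rpow_div_sub_rpow_div_mul_div hPint ha hx]
  refine ⟨by simp [hv], fun x => C * (d2 * x ^ (d2 - 1) * G d2 x - d1 * x ^ (d1 - 1) * G d1 x),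
    by simp [G, weightedPrimitive], fun x hx => ?_, fun x hx => ?_⟩
  · have hI := intervalIntegrable_rpow_deriv_mul_weightedPrimitive hPint ha hx
    rw [hvG x hx, intervalIntegral.integral_const_mul, integral_sub (hI _ _) (hI _ _),
      integral_rpow_deriv_mul_weightedPrimitive hPint ha hx (e := -1) (by ring),
      integral_rpow_deriv_mul_weightedPrimitive hPint ha hx (e := -1) (by ring)]
    ring
  · have hI := intervalIntegrable_rpow_deriv_mul_weightedPrimitive hPint ha hx
    have hI2 := (hI (d2 - 1) d2).const_mul (C * d2)
    have hI1 := (hI (d1 - 1) d1).const_mul (C * d1)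
    have hIP := (intervalIntegrable_mul_rpow hPint ha hx (-2)).const_mul (C * (d2 - d1))
    rw [integral_congr (g := fun t => C * d2 * ((d2 - 1) * t ^ (d2 - 1 - 1) * G d2 t)
        - C * d1 * ((d1 - 1) * t ^ (d1 - 1 - 1) * G d1 t) + C * (d2 - d1) * (Prof t * t ^ (-2 : ℝ)))
        fun t ht => by
          rw [hvG t (pos_of_mem_uIcc ha hx ht)]
          exact gbm_ode_integrand_eq hσ.ne' hC (pos_of_mem_uIcc ha hx ht),
      integral_add (hI2.sub hI1) hIP, integral_sub hI2 hI1, intervalIntegral.integral_const_mul,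
      intervalIntegral.integral_const_mul, intervalIntegral.integral_const_mul,
      integral_rpow_deriv_mul_weightedPrimitive hPint ha hx (e := -2) (by ring),
      integral_rpow_deriv_mul_weightedPrimitive hPint ha hx (e := -2) (by ring)]
    ring

/-- GBM case with d₁ < d₂: v_{a,0}(x) = (−2/(σ²(d₂−d₁))) ∫ₐˣ ((x/z)^{d₂} −
(x/z)^{d₁}) Π(z)/z dz is a Carathéodory solution of
r v − αx v' − (σ²/2)x² v'' − Π = 0 on (0,∞) with v(a) = v'(a) = 0, where
α = (σ²/2)(1−d₁−d₂), r = −(σ²/2)d₁d₂. -/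
theorem stmt_10 (d1 d2 σ a : ℝ) (hd : d1 < d2) (hσ : 0 < σ) (ha : 0 < a)
    (Prof : ℝ → ℝ) (hmP : Measurable Prof)
    (hPint : MeasureTheory.LocallyIntegrableOn (fun z => Prof z / z ^ 2) (Set.Ioi 0))
    (v : ℝ → ℝ)
    (hv : ∀ x : ℝ, v x =
      -2 / (σ ^ 2 * (d2 - d1)) *
        ∫ z in a..x, ((x / z) ^ d2 - (x / z) ^ d1) * Prof z / z) :
    v a = 0 ∧
    ∃ w : ℝ → ℝ, w a = 0 ∧
      (∀ x ∈ Set.Ioi (0 : ℝ), v x = ∫ t in a..x, w t) ∧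
      (∀ x ∈ Set.Ioi (0 : ℝ), w x =
        ∫ t in a..x, 2 / (σ ^ 2 * t ^ 2) *
          (-(σ ^ 2 / 2) * (d1 * d2) * v t
            - σ ^ 2 / 2 * (1 - d1 - d2) * t * w t - Prof t)) :=
  stmt_10_general d1 d2 σ a hd hσ ha Prof hPint v hv
end

section
/- Let d₁ = −2, d₂ = −1, 0 < x₁ < x₂, and Π(x) = 2·𝟙_{[x₁,x₂]}(x) − 1 on (0,∞). The system ∫ₐᵇ z^{−d₂−1}Π(z)dz = 0, ∫ₐᵇ z^{−d₁−1}Π(z)dz = 0 with 0 < a < b < ∞ has a solution if and only if x₁ > x₂/3, in which case the unique solution is a = (3x₁ − x₂)/2, b = (3x₂ − x₁)/2. -/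
/-! On `[a, b]` the profile is `+1` exactly on `[c, d]`, where `c` and `d` are `x₁` and `x₂`
clamped to `[a, b]`. The two moment conditions then read `2 (d - c) = b - a` and
`d² - c² = (b² - a²) / 2`, so `c + d = a + b` and `c, d` are the quarter points
`(3a + b) / 4, (a + 3b) / 4`. These lie strictly inside `(a, b)`, so no clamping occurs:
`c = x₁`, `d = x₂`, which determines `a` and `b`; finally `0 < a` is exactly `x₂ < 3 x₁`. -/

open MeasureTheory Set

section LinearOrder

variable {α : Type*} [LinearOrder α] {a b x₁ x₂ : α}

lemma Ioc_max_min_eq : Ioc (max a (min b x₁)) (max a (min b x₂)) = Ioc (max a x₁) (min b x₂) := by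
  ext z
  simp only [mem_Ioc, max_lt_iff, le_max_iff, le_min_iff, min_lt_iff]
  grind

lemma max_min_eq_of_mem_Ioo {x : α} (ha : a < max a (min b x)) (hb : max a (min b x) < b) :
    max a (min b x) = x := by
  grind

end LinearOrder

variable {a b x₁ x₂ : ℝ}

lemma intervalIntegral.integral_indicator_Icc {E : Type*} [NormedAddCommGroup E] [NormedSpace ℝ E]
    (f : ℝ → E) (hab : a ≤ b) (hx : x₁ ≤ x₂) :
    ∫ z in a..b, (Icc x₁ x₂).indicator f z = ∫ z in max a (min b x₁)..max a (min b x₂), f z := by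
  have hcd : max a (min b x₁) ≤ max a (min b x₂) := by gcongr
  rw [intervalIntegral.integral_of_le hab, intervalIntegral.integral_of_le hcd,
    MeasureTheory.integral_indicator measurableSet_Icc, Measure.restrict_restrict measurableSet_Icc,
    Ioc_max_min_eq, ← Ioc_inter_Ioc, inter_comm (Icc x₁ x₂)]
  exact setIntegral_congr_set ((ae_eq_refl _).inter Ioc_ae_eq_Icc.symm)

lemma intervalIntegral.integral_mul_two_indicator_sub_one {g : ℝ → ℝ} (hg : Continuous g)
    (hab : a ≤ b) (hx : x₁ ≤ x₂) :
    ∫ z in a..b, g z * (2 * (Icc x₁ x₂).indicator (fun _ => 1) z - 1)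
      = 2 * (∫ z in max a (min b x₁)..max a (min b x₂), g z) - ∫ z in a..b, g z := by
  have hpt : ∀ z, g z * (2 * (Icc x₁ x₂).indicator (fun _ => 1) z - 1)
      = 2 * (Icc x₁ x₂).indicator g z - g z := by
    intro z
    simp only [indicator_apply]
    split_ifs <;> ring
  have hint : IntervalIntegrable ((Icc x₁ x₂).indicator g) volume a b :=
    ⟨(hg.intervalIntegrable a b).1.indicator measurableSet_Icc,
      (hg.intervalIntegrable a b).2.indicator measurableSet_Icc⟩
  simp only [hpt]
  rw [intervalIntegral.integral_sub (hint.const_mul 2) (hg.intervalIntegrable a b),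
    intervalIntegral.integral_const_mul, integral_indicator_Icc g hab hx]

lemma eq_of_two_mul_sub_eq_of_sq_sub_sq_eq {c d : ℝ} (hab : a < b) (h₀ : 2 * (d - c) = b - a)
    (h₁ : d ^ 2 - c ^ 2 = (b ^ 2 - a ^ 2) / 2) : c = (3 * a + b) / 4 ∧ d = (a + 3 * b) / 4 := by
  have hsum : d + c = a + b := by
    have hne : d - c ≠ 0 := by linarith
    apply mul_left_cancel₀ hne
    linear_combination h₁ - (a + b) / 2 * h₀
  constructor <;> linarith

lemma moments_two_indicator_sub_one_eq_zero_iff (hab : a < b) (hx : x₁ ≤ x₂) :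
    ((∫ z in a..b, 1 * (2 * (Icc x₁ x₂).indicator (fun _ => (1 : ℝ)) z - 1)) = 0 ∧
        (∫ z in a..b, z * (2 * (Icc x₁ x₂).indicator (fun _ => (1 : ℝ)) z - 1)) = 0) ↔
      a = (3 * x₁ - x₂) / 2 ∧ b = (3 * x₂ - x₁) / 2 := by
  rw [intervalIntegral.integral_mul_two_indicator_sub_one (g := fun _ => 1) continuous_const
      hab.le hx,
    intervalIntegral.integral_mul_two_indicator_sub_one (g := fun z => z) continuous_id hab.le hx,
    integral_one, integral_one, integral_id, integral_id]
  constructor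
  · rintro ⟨h₀, h₁⟩
    obtain ⟨hc, hd⟩ := eq_of_two_mul_sub_eq_of_sq_sub_sq_eq (c := max a (min b x₁))
      (d := max a (min b x₂)) hab (by linarith) (by linarith)
    have hc₁ : max a (min b x₁) = x₁ := max_min_eq_of_mem_Ioo (by linarith) (by linarith)
    have hd₂ : max a (min b x₂) = x₂ := max_min_eq_of_mem_Ioo (by linarith) (by linarith)
    constructor <;> linarith
  · rintro ⟨rfl, rfl⟩
    rw [min_eq_right (by linarith), max_eq_right (by linarith), min_eq_right (by linarith),
      max_eq_right (by linarith)]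
    constructor <;> ring

theorem stmt_12_general (x1 x2 : ℝ) (h12 : x1 < x2)
    (d1 d2 : ℝ) (hd1 : d1 = -2) (hd2 : d2 = -1)
    (Prof : ℝ → ℝ)
    (hP : ∀ x : ℝ, Prof x = 2 * Set.indicator (Set.Icc x1 x2) (fun _ => (1 : ℝ)) x - 1) :
    ((∃ a b : ℝ, 0 < a ∧ a < b ∧
        (∫ z in a..b, z ^ (-d2 - 1) * Prof z) = 0 ∧
        (∫ z in a..b, z ^ (-d1 - 1) * Prof z) = 0) ↔ x2 / 3 < x1) ∧
    (∀ a b : ℝ, 0 < a → a < b →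
      (∫ z in a..b, z ^ (-d2 - 1) * Prof z) = 0 →
      (∫ z in a..b, z ^ (-d1 - 1) * Prof z) = 0 →
      a = (3 * x1 - x2) / 2 ∧ b = (3 * x2 - x1) / 2) := by
  obtain rfl := funext hP
  subst hd1 hd2
  norm_num only [Real.rpow_zero, Real.rpow_one]
  have key := fun a b (hab : a < b) => moments_two_indicator_sub_one_eq_zero_iff hab h12.le
  refine ⟨⟨?_, fun hx => ?_⟩, fun a b _ hab h₀ h₁ => (key a b hab).1 ⟨h₀, h₁⟩⟩
  · rintro ⟨a, b, ha, hab, h₀, h₁⟩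
    obtain ⟨rfl, -⟩ := (key a b hab).1 ⟨h₀, h₁⟩
    linarith
  · exact ⟨_, _, by linarith, by linarith, (key _ _ (by linarith)).2 ⟨rfl, rfl⟩⟩

/-- Example 1: with d₁ = −2, d₂ = −1 and Π = 2·𝟙_{[x₁,x₂]} − 1, the system
∫ₐᵇ z^{−d₂−1}Π = 0, ∫ₐᵇ z^{−d₁−1}Π = 0, 0 < a < b, has a solution iff
x₁ > x₂/3, in which case the unique solution is a = (3x₁−x₂)/2, b = (3x₂−x₁)/2. -/
theorem stmt_12 (x1 x2 : ℝ) (h1 : 0 < x1) (h12 : x1 < x2)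
    (d1 d2 : ℝ) (hd1 : d1 = -2) (hd2 : d2 = -1)
    (Prof : ℝ → ℝ)
    (hP : ∀ x : ℝ, Prof x = 2 * Set.indicator (Set.Icc x1 x2) (fun _ => (1 : ℝ)) x - 1) :
    ((∃ a b : ℝ, 0 < a ∧ a < b ∧
        (∫ z in a..b, z ^ (-d2 - 1) * Prof z) = 0 ∧
        (∫ z in a..b, z ^ (-d1 - 1) * Prof z) = 0) ↔ x2 / 3 < x1) ∧
    (∀ a b : ℝ, 0 < a → a < b →
      (∫ z in a..b, z ^ (-d2 - 1) * Prof z) = 0 →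
      (∫ z in a..b, z ^ (-d1 - 1) * Prof z) = 0 →
      a = (3 * x1 - x2) / 2 ∧ b = (3 * x2 - x1) / 2) :=
  stmt_12_general x1 x2 h12 d1 d2 hd1 hd2 Prof hP
end

section
/- Let α, σ be as in the Engelbert–Schmidt setting and fix m < a < b < M. The function v(x) = (∫ₐˣ exp(−∫ₐ^{z₁} 2α(z₂)/σ(z₂)² dz₂) dz₁) / (∫ₐᵇ exp(−∫ₐ^{z₁} 2α(z₂)/σ(z₂)² dz₂) dz₁) is the unique C¹ function with absolutely continuous derivative solving α v' + (σ²/2) v'' = 0 a.e. on [a,b] with boundary conditions v(a) = 0, v(b) = 1; moreover 0 < v(x) < 1 for all x ∈ (a,b), and v is strictly increasing. -/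
/-!
Put `f = -2α/σ²`. Since `f` is integrable on `[a, b]`, its primitive is absolutely continuous, and
so is `exp (∫ₐˣ f)`, which is then a solution of `w = w a + ∫ₐˣ f w` by the fundamental theorem of
calculus for absolutely continuous functions. Conversely, for any solution `w` the product
`w · exp (-∫ₐˣ f)` is absolutely continuous with derivative zero a.e., hence constant: the solutions
are exactly the multiples of `exp (∫ₐˣ f)`. So every `C¹` solution `u` of the boundary problem is
`c ∫ₐˣ exp (∫ₐᶻ f) dz`, and `u b = 1` fixes `c`. Positivity of the exponential gives strict
monotonicity, hence `0 < v < 1` inside.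
-/

open MeasureTheory Set Filter

namespace AbsolutelyContinuousOnInterval

variable {X Y : Type*} [PseudoMetricSpace X] [PseudoMetricSpace Y] {f g : ℝ → X} {a b : ℝ}

theorem congr (hf : AbsolutelyContinuousOnInterval f a b) (hfg : EqOn f g (uIcc a b)) :
    AbsolutelyContinuousOnInterval g a b := by
  refine hf.congr' (eventually_inf_principal.2 (Eventually.of_forall fun E hE => ?_))
  refine Finset.sum_congr rfl fun i hi => ?_
  rw [hfg (hE.1 i hi).1, hfg (hE.1 i hi).2]

theorem const_add {F : Type*} [SeminormedAddCommGroup F] {f : ℝ → F} (c : F)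
    (hf : AbsolutelyContinuousOnInterval f a b) :
    AbsolutelyContinuousOnInterval (fun x => c + f x) a b := by
  simpa only [AbsolutelyContinuousOnInterval, dist_add_left] using hf

theorem _root_.LipschitzOnWith.comp_absolutelyContinuousOnInterval {φ : X → Y} {s : Set X}
    {K : NNReal} (hφ : LipschitzOnWith K φ s) (hf : AbsolutelyContinuousOnInterval f a b)
    (hfs : MapsTo f (uIcc a b) s) : AbsolutelyContinuousOnInterval (φ ∘ f) a b := by
  refine squeeze_zero' (Eventually.of_forall fun E => Finset.sum_nonneg fun i _ => dist_nonneg)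
    (eventually_inf_principal.2 (Eventually.of_forall fun E hE => ?_))
    (by simpa using (show Tendsto _ _ _ from hf).const_mul (K : ℝ))
  rw [Finset.mul_sum]
  exact Finset.sum_le_sum fun i hi =>
    hφ.dist_le_mul _ (hfs (hE.1 i hi).1) _ (hfs (hE.1 i hi).2)

theorem _root_.LocallyLipschitz.comp_absolutelyContinuousOnInterval {F : Type*}
    [SeminormedAddCommGroup F] {f : ℝ → F} {φ : F → Y}
    (hφ : LocallyLipschitz φ) (hf : AbsolutelyContinuousOnInterval f a b) :
    AbsolutelyContinuousOnInterval (φ ∘ f) a b := by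
  have hcpt : IsCompact (f '' uIcc a b) := isCompact_uIcc.image_of_continuousOn hf.continuousOn
  obtain ⟨K, hK⟩ := LocallyLipschitzOn.exists_lipschitzOnWith_of_compact hcpt
    hφ.locallyLipschitzOn
  exact hK.comp_absolutelyContinuousOnInterval hf (mapsTo_image f _)

end AbsolutelyContinuousOnInterval

namespace IntervalIntegrable

variable {f w : ℝ → ℝ} {a b : ℝ}

theorem absolutelyContinuousOnInterval_exp_integral (hf : IntervalIntegrable f volume a b) :
    AbsolutelyContinuousOnInterval (fun x => Real.exp (∫ t in a..x, f t)) a b :=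
  Real.contDiff_exp.locallyLipschitz.comp_absolutelyContinuousOnInterval
    (hf.absolutelyContinuousOnInterval_intervalIntegral left_mem_uIcc)

theorem ae_hasDerivAt_exp_integral (hf : IntervalIntegrable f volume a b) :
    ∀ᵐ x, x ∈ uIcc a b → HasDerivAt (fun x => Real.exp (∫ t in a..x, f t))
      (Real.exp (∫ t in a..x, f t) * f x) x := by
  filter_upwards [hf.ae_hasDerivAt_integral] with x hx hxab
  exact (hx hxab a left_mem_uIcc).exp

theorem exp_integral_eq_one_add_integral (hf : IntervalIntegrable f volume a b) {x : ℝ}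
    (hx : x ∈ uIcc a b) :
    Real.exp (∫ t in a..x, f t) = 1 + ∫ t in a..x, f t * Real.exp (∫ s in a..t, f s) := by
  have hsub : uIcc a x ⊆ uIcc a b := uIcc_subset_uIcc_left hx
  have hderiv : ∫ t in a..x, deriv (fun x => Real.exp (∫ t in a..x, f t)) t =
      ∫ t in a..x, f t * Real.exp (∫ s in a..t, f s) := by
    refine intervalIntegral.integral_congr_ae ?_
    filter_upwards [hf.ae_hasDerivAt_exp_integral] with t ht htax
    rw [(ht (hsub (uIoc_subset_uIcc htax))).deriv, mul_comm]
  have := (hf.absolutelyContinuousOnInterval_exp_integral.mono hsub).integral_deriv_eq_sub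
  simp only [intervalIntegral.integral_same, Real.exp_zero] at this
  linarith

theorem eq_mul_exp_integral_of_intervalIntegrable (hab : a ≤ b)
    (hf : IntervalIntegrable f volume a b)
    (hfw : IntervalIntegrable (fun t => f t * w t) volume a b)
    (hw : ∀ x ∈ Icc a b, w x = w a + ∫ t in a..x, f t * w t) :
    ∀ x ∈ Icc a b, w x = w a * Real.exp (∫ t in a..x, f t) := by
  set E : ℝ → ℝ := fun x => Real.exp (∫ t in a..x, -f t)
  have hE : AbsolutelyContinuousOnInterval E a b :=
    hf.neg.absolutelyContinuousOnInterval_exp_integral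
  have hwAC : AbsolutelyContinuousOnInterval w a b :=
    ((hfw.absolutelyContinuousOnInterval_intervalIntegral left_mem_uIcc).const_add (w a)).congr
      fun x hx => (hw x (by rwa [uIcc_of_le hab] at hx)).symm
  have hderiv : ∀ᵐ x, x ∈ uIcc a b → HasDerivAt (fun x => w x * E x) 0 x := by
    have ha : ∀ᵐ x : ℝ, x ≠ a := by simp [ae_iff, measure_singleton]
    have hb : ∀ᵐ x : ℝ, x ≠ b := by simp [ae_iff, measure_singleton]
    filter_upwards [hfw.ae_hasDerivAt_integral, hf.neg.ae_hasDerivAt_exp_integral, ha, hb]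
      with x hP hEx hxa hxb hx
    rw [uIcc_of_le hab] at hx
    have hwx : HasDerivAt w (f x * w x) x :=
      ((hP (by rwa [uIcc_of_le hab]) a left_mem_uIcc).const_add (w a)).congr_of_eventuallyEq
        (eventually_of_mem (Icc_mem_nhds (hx.1.lt_of_ne' hxa) (hx.2.lt_of_ne hxb)) hw)
    exact (hwx.mul (hEx (by rwa [uIcc_of_le hab]))).congr_deriv
      (by simp only [Pi.neg_apply]; ring)
  obtain ⟨C, hC⟩ := hwAC.mul hE |>.const_of_ae_hasDerivAt_zero hderiv
  intro x hx
  have hwE : w x * E x = w a * E a :=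
    (hC x (by rwa [uIcc_of_le hab])).trans (hC a left_mem_uIcc).symm
  simp only [E, intervalIntegral.integral_same, intervalIntegral.integral_neg, Real.exp_neg,
    Real.exp_zero, inv_one, mul_one] at hwE
  rw [← hwE]
  field_simp

theorem intervalIntegrable_mul_of_eq_add_integral (hab : a ≤ b)
    (hf : IntervalIntegrable f volume a b)
    (hw : ∀ x ∈ Icc a b, w x = w a + ∫ t in a..x, f t * w t) :
    IntervalIntegrable (fun t => f t * w t) volume a b := by
  -- Where `f * w` is not integrable on `[a, x]` the integral is `0`, so `w x = w a`. Below
  -- `c = sSup S` the integrable case applies, above it `w` is constant: `f * w` is integrable.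
  set S := {x ∈ Icc a b | IntervalIntegrable (fun t => f t * w t) volume a x}
  have haS : a ∈ S := ⟨left_mem_Icc.2 hab, .refl⟩
  have hSbdd : BddAbove S := ⟨b, fun x hx => hx.1.2⟩
  set c := sSup S
  have hac : a ≤ c := le_csSup hSbdd haS
  have hcb : c ≤ b := csSup_le ⟨a, haS⟩ fun x hx => hx.1.2
  have below : EqOn w (fun t => w a * Real.exp (∫ s in a..t, f s)) (Ioo a c) := by
    intro t ht
    obtain ⟨s, hs, hts⟩ := exists_lt_of_lt_csSup ⟨a, haS⟩ ht.2
    exact eq_mul_exp_integral_of_intervalIntegrable hs.1.1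
      (hf.mono_set (uIcc_subset_uIcc_left (by rw [uIcc_of_le hab]; exact hs.1))) hs.2
      (fun x hx => hw x ⟨hx.1, hx.2.trans hs.1.2⟩) t ⟨ht.1.le, hts.le⟩
  have above : EqOn w (fun _ => w a) (Ioo c b) := by
    intro t ht
    have hnot : ¬ IntervalIntegrable (fun t => f t * w t) volume a t := fun hint =>
      ht.1.not_ge (le_csSup hSbdd ⟨⟨hac.trans ht.1.le, ht.2.le⟩, hint⟩)
    rw [hw t ⟨hac.trans ht.1.le, ht.2.le⟩, intervalIntegral.integral_undef hnot, add_zero]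
  have hexp : ContinuousOn (fun t => Real.exp (∫ s in a..t, f s)) (uIcc a c) :=
    (hf.absolutelyContinuousOnInterval_exp_integral.mono
      (uIcc_subset_uIcc_left (by rw [uIcc_of_le hab]; exact ⟨hac, hcb⟩))).continuousOn
  refine IntervalIntegrable.trans (b := c) ?_ ?_
  · refine (((hf.mono_set (uIcc_subset_uIcc_left ?_)).mul_continuousOn hexp).const_mul
      (w a)).congr_uIoo fun t ht => ?_
    · rw [uIcc_of_le hab]; exact ⟨hac, hcb⟩
    · rw [uIoo_of_le hac] at ht
      simp only [below ht]
      ring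
  · refine ((hf.mono_set (uIcc_subset_uIcc_right ?_)).mul_const (w a)).congr_uIoo
      fun t ht => ?_
    · rw [uIcc_of_le hab]; exact ⟨hac, hcb⟩
    · rw [uIoo_of_le hcb] at ht
      simp only [above ht]

theorem eq_mul_exp_integral_of_eq_add_integral (hab : a ≤ b)
    (hf : IntervalIntegrable f volume a b)
    (hw : ∀ x ∈ Icc a b, w x = w a + ∫ t in a..x, f t * w t) :
    ∀ x ∈ Icc a b, w x = w a * Real.exp (∫ t in a..x, f t) :=
  eq_mul_exp_integral_of_intervalIntegrable hab hf
    (intervalIntegrable_mul_of_eq_add_integral hab hf hw) hw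

end IntervalIntegrable

theorem strictMonoOn_integral_of_pos {ρ : ℝ → ℝ} {a b : ℝ}
    (hρ : IntervalIntegrable ρ volume a b) (hpos : ∀ x ∈ Ioo a b, 0 < ρ x) :
    StrictMonoOn (fun x => ∫ t in a..x, ρ t) (Icc a b) := by
  intro x hx y hy hxy
  have hsub : ∀ z ∈ Icc a b, uIcc a z ⊆ uIcc a b := fun z hz =>
    uIcc_subset_uIcc_left (by rwa [uIcc_of_le (hz.1.trans hz.2)])
  have hxy_pos : 0 < ∫ t in x..y, ρ t :=
    intervalIntegral.intervalIntegral_pos_of_pos_on (hρ.mono_set (uIcc_subset_uIcc ?_ ?_))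
      (fun t ht => hpos t ⟨hx.1.trans_lt ht.1, ht.2.trans_le hy.2⟩) hxy
  · rw [← intervalIntegral.integral_interval_sub_left (hρ.mono_set (hsub y hy))
      (hρ.mono_set (hsub x hx))] at hxy_pos
    exact sub_pos.1 hxy_pos
  all_goals rw [uIcc_of_le (hx.1.trans hx.2)]
  exacts [hx, hy]

noncomputable def scaleFunction (f : ℝ → ℝ) (a b x : ℝ) : ℝ :=
  (∫ z in a..x, Real.exp (∫ t in a..z, f t)) / ∫ z in a..b, Real.exp (∫ t in a..z, f t)

section scaleFunction

variable {f : ℝ → ℝ} {a b : ℝ}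

theorem scaleFunction_left : scaleFunction f a b a = 0 := by
  simp [scaleFunction]

theorem strictMonoOn_integral_exp_integral (hf : IntervalIntegrable f volume a b) :
    StrictMonoOn (fun x => ∫ z in a..x, Real.exp (∫ t in a..z, f t)) (Icc a b) :=
  strictMonoOn_integral_of_pos
    (hf.absolutelyContinuousOnInterval_exp_integral.continuousOn.intervalIntegrable)
    fun _ _ => Real.exp_pos _

theorem integral_exp_integral_pos (hab : a < b) (hf : IntervalIntegrable f volume a b) :
    0 < ∫ z in a..b, Real.exp (∫ t in a..z, f t) := by
  simpa using
    strictMonoOn_integral_exp_integral hf (left_mem_Icc.2 hab.le) (right_mem_Icc.2 hab.le) hab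

theorem scaleFunction_right (hab : a < b) (hf : IntervalIntegrable f volume a b) :
    scaleFunction f a b b = 1 :=
  div_self (integral_exp_integral_pos hab hf).ne'

theorem strictMonoOn_scaleFunction (hab : a < b) (hf : IntervalIntegrable f volume a b) :
    StrictMonoOn (scaleFunction f a b) (Icc a b) := fun _ hx _ hy hxy =>
  div_lt_div_of_pos_right (strictMonoOn_integral_exp_integral hf hx hy hxy)
    (integral_exp_integral_pos hab hf)

theorem scaleFunction_mem_Ioo (hab : a < b) (hf : IntervalIntegrable f volume a b) {x : ℝ}
    (hx : x ∈ Ioo a b) : scaleFunction f a b x ∈ Ioo 0 1 := by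
  have hmono := strictMonoOn_scaleFunction hab hf
  rw [← scaleFunction_left (f := f) (b := b), ← scaleFunction_right hab hf]
  exact ⟨hmono (left_mem_Icc.2 hab.le) (Ioo_subset_Icc_self hx) hx.1,
    hmono (Ioo_subset_Icc_self hx) (right_mem_Icc.2 hab.le) hx.2⟩

theorem exists_deriv_scaleFunction (hf : IntervalIntegrable f volume a b) :
    ∃ w : ℝ → ℝ,
      (∀ x ∈ Icc a b, scaleFunction f a b x = scaleFunction f a b a + ∫ t in a..x, w t) ∧
      (∀ x ∈ Icc a b, w x = w a + ∫ t in a..x, f t * w t) := by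
  set D := ∫ z in a..b, Real.exp (∫ t in a..z, f t)
  refine ⟨fun x => Real.exp (∫ t in a..x, f t) / D, fun _ _ => ?_, fun x hx => ?_⟩
  · simp [scaleFunction, D, intervalIntegral.integral_div]
  · simp only [mul_div_assoc', intervalIntegral.integral_div, intervalIntegral.integral_same,
      Real.exp_zero, ← add_div]
    rw [← hf.exp_integral_eq_one_add_integral (Icc_subset_uIcc hx)]

theorem eqOn_scaleFunction (hab : a ≤ b) (hf : IntervalIntegrable f volume a b) {u : ℝ → ℝ}
    (hu : ∃ w : ℝ → ℝ, (∀ x ∈ Icc a b, u x = u a + ∫ t in a..x, w t) ∧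
      (∀ x ∈ Icc a b, w x = w a + ∫ t in a..x, f t * w t))
    (hua : u a = 0) (hub : u b = 1) : EqOn u (scaleFunction f a b) (Icc a b) := by
  obtain ⟨w, hu, hw⟩ := hu
  have hux : ∀ x ∈ Icc a b, u x = w a * ∫ z in a..x, Real.exp (∫ t in a..z, f t) := by
    intro x hx
    rw [hu x hx, hua, zero_add, ← intervalIntegral.integral_const_mul]
    refine intervalIntegral.integral_congr fun t ht => ?_
    rw [uIcc_of_le hx.1] at ht
    exact hf.eq_mul_exp_integral_of_eq_add_integral hab hw t ⟨ht.1, ht.2.trans hx.2⟩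
  have hD := (hux b (right_mem_Icc.2 hab)).symm.trans hub
  intro x hx
  rw [hux x hx, scaleFunction, eq_div_iff (right_ne_zero_of_mul_eq_one hD), mul_right_comm, hD,
    one_mul]

end scaleFunction

theorem stmt_14_general (I : Set ℝ) (hIconn : I.OrdConnected)
    (α σ : ℝ → ℝ)
    (hint2 : MeasureTheory.LocallyIntegrableOn (fun z => α z / (σ z) ^ 2) I)
    (a b : ℝ) (ha : a ∈ I) (hb : b ∈ I) (hab : a < b)
    (v : ℝ → ℝ)
    (hv : ∀ x : ℝ, v x =
      (∫ z1 in a..x, Real.exp (-∫ z2 in a..z1, 2 * α z2 / (σ z2) ^ 2)) /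
      (∫ z1 in a..b, Real.exp (-∫ z2 in a..z1, 2 * α z2 / (σ z2) ^ 2))) :
    (∃ w : ℝ → ℝ,
      (∀ x ∈ Set.Icc a b, v x = v a + ∫ t in a..x, w t) ∧
      (∀ x ∈ Set.Icc a b, w x = w a + ∫ t in a..x, -(2 * α t / (σ t) ^ 2) * w t)) ∧
    v a = 0 ∧ v b = 1 ∧
    (∀ u : ℝ → ℝ,
      (∃ w : ℝ → ℝ,
        (∀ x ∈ Set.Icc a b, u x = u a + ∫ t in a..x, w t) ∧
        (∀ x ∈ Set.Icc a b, w x = w a + ∫ t in a..x, -(2 * α t / (σ t) ^ 2) * w t)) →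
      u a = 0 → u b = 1 → ∀ x ∈ Set.Icc a b, u x = v x) ∧
    (∀ x ∈ Set.Ioo a b, 0 < v x ∧ v x < 1) ∧
    StrictMonoOn v (Set.Icc a b) := by
  set f : ℝ → ℝ := fun t => -(2 * α t / σ t ^ 2)
  have hf : IntervalIntegrable f volume a b := by
    have h : IntegrableOn (fun t => -2 * (α t / σ t ^ 2)) (Icc a b) :=
      (hint2.integrableOn_compact_subset (hIconn.out ha hb) isCompact_Icc).const_mul (-2)
    rw [intervalIntegrable_iff_integrableOn_Icc_of_le hab.le]
    refine h.congr_fun (fun t _ => ?_) measurableSet_Icc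
    simp only [f]
    ring
  obtain rfl : v = scaleFunction f a b := funext fun x => by
    simp only [hv, scaleFunction, f, intervalIntegral.integral_neg]
  exact ⟨exists_deriv_scaleFunction hf, scaleFunction_left, scaleFunction_right hab hf,
    fun u hu hua hub => eqOn_scaleFunction hab.le hf hu hua hub,
    fun x hx => scaleFunction_mem_Ioo hab hf hx, strictMonoOn_scaleFunction hab hf⟩

/-- Scale-function formula: v(x) = ∫ₐˣ e^{−∫ₐ^{z₁} 2α/σ²}dz₁ / ∫ₐᵇ e^{−∫ₐ^{z₁} 2α/σ²}dz₁
is the unique Carathéodory solution of α v' + (σ²/2) v'' = 0 on [a,b] with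
v(a) = 0, v(b) = 1; moreover 0 < v < 1 on (a,b) and v is strictly increasing. -/
theorem stmt_14 (I : Set ℝ) (hI : IsOpen I) (hIconn : I.OrdConnected)
    (α σ : ℝ → ℝ) (hmα : Measurable α) (hmσ : Measurable σ)
    (hσpos : ∀ x ∈ I, 0 < σ x)
    (hint1 : MeasureTheory.LocallyIntegrableOn (fun z => 1 / (σ z) ^ 2) I)
    (hint2 : MeasureTheory.LocallyIntegrableOn (fun z => α z / (σ z) ^ 2) I)
    (a b : ℝ) (ha : a ∈ I) (hb : b ∈ I) (hab : a < b)
    (v : ℝ → ℝ)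
    (hv : ∀ x : ℝ, v x =
      (∫ z1 in a..x, Real.exp (-∫ z2 in a..z1, 2 * α z2 / (σ z2) ^ 2)) /
      (∫ z1 in a..b, Real.exp (-∫ z2 in a..z1, 2 * α z2 / (σ z2) ^ 2))) :
    (∃ w : ℝ → ℝ,
      (∀ x ∈ Set.Icc a b, v x = v a + ∫ t in a..x, w t) ∧
      (∀ x ∈ Set.Icc a b, w x = w a + ∫ t in a..x, -(2 * α t / (σ t) ^ 2) * w t)) ∧
    v a = 0 ∧ v b = 1 ∧
    (∀ u : ℝ → ℝ,
      (∃ w : ℝ → ℝ,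
        (∀ x ∈ Set.Icc a b, u x = u a + ∫ t in a..x, w t) ∧
        (∀ x ∈ Set.Icc a b, w x = w a + ∫ t in a..x, -(2 * α t / (σ t) ^ 2) * w t)) →
      u a = 0 → u b = 1 → ∀ x ∈ Set.Icc a b, u x = v x) ∧
    (∀ x ∈ Set.Ioo a b, 0 < v x ∧ v x < 1) ∧
    StrictMonoOn v (Set.Icc a b) :=
  stmt_14_general I hIconn α σ hint2 a b ha hb hab v hv
end

section
/- Let [a,b] and [a',b'] be compact subintervals of I with a < a' < b < b', and suppose both satisfy: the two-point boundary value problem r v − α v' − (σ²/2)v'' − Π = 0, v at endpoints zero, has solution strictly positive in the open interval (denote these solutions v^{[a,b]} and v^{[a',b']}). Assume φ₁₂(x,y) > 0 for all x < y in I. Then the solution v^{[a,b']} with zero boundary values at a and b' satisfies v^{[a,b']}(x) > max(v^{[a,b]}(x), v^{[a',b']}(x)) for all x ∈ (a,b'); in particular v^{[a,b']} > 0 on (a,b'). -/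
/-!
The differences `v^{[a,b']} - v^{[a,b]}` and `v^{[a,b']} - v^{[a',b']}` solve the homogeneous
equation and vanish at `a`, resp. `b'`, so they are multiples `Δ φ₁₂(a, ·)` and `C ψ` of
homogeneous solutions that are positive on `(a, b')`. Evaluating at `b` and `a'`, where
`v^{[a,b]}`, resp. `v^{[a',b']}`, vanish, gives a `2 × 2` linear system for `(Δ, C)` with
positive right-hand side `(v^{[a',b']}(b), v^{[a,b]}(a'))`, positive diagonal, nonpositive
off-diagonal and determinant `φ₁₂(a', b) φ₁₂(a, b') > 0`; hence `Δ, C > 0`.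

The analytic input is uniqueness for the linear system, which yields the cocycle identity
`φ(x, y) = φ(u, y) φ(x, u)` and a positive Wronskian. Since the hypotheses are integral
equations in which a non-integrable integrand contributes the junk value `0`, continuity of the
solutions is not given and is bootstrapped from Gronwall's inequality.
-/

open MeasureTheory Set intervalIntegral Topology

namespace BVPFusion

lemma intervalIntegrable_mul_of_continuousOn {k E : ℝ → ℝ} {c d p q : ℝ}
    (hk : IntegrableOn k (Icc c d)) (hE : ContinuousOn E (Icc c d))
    (hp : p ∈ Icc c d) (hq : q ∈ Icc c d) :
    IntervalIntegrable (fun z => k z * E z) volume p q :=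
  ((hk.mul_continuousOn hE isCompact_Icc).mono_set (uIcc_subset_Icc hp hq)).intervalIntegrable

lemma continuousOn_primitive_Icc_of_le {f : ℝ → ℝ} {p q : ℝ} (hpq : p ≤ q)
    (hf : IntervalIntegrable f volume p q) :
    ContinuousOn (fun y => ∫ z in p..y, f z) (Icc p q) := by
  simpa only [uIcc_of_le hpq] using
    continuousOn_primitive_interval' hf (left_mem_uIcc : p ∈ uIcc p q)

section Gronwall

variable {p q K : ℝ} {h N : ℝ → ℝ}

lemma le_two_mul_of_le_add_integral (hpq : p ≤ q) (hh : IntegrableOn h (Icc p q))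
    (hh0 : ∀ z ∈ Icc p q, 0 ≤ h z) (hN : ContinuousOn N (Icc p q))
    (hN0 : ∀ z ∈ Icc p q, 0 ≤ N z) (hsmall : ∫ z in p..q, h z ≤ 1 / 2)
    (hle : ∀ y ∈ Icc p q, N y ≤ K + ∫ z in p..y, h z * N z) :
    ∀ y ∈ Icc p q, N y ≤ 2 * K := by
  obtain ⟨y₀, hy₀, hmax⟩ := isCompact_Icc.exists_isMaxOn (nonempty_Icc.2 hpq) hN
  have hp : p ∈ Icc p q := left_mem_Icc.2 hpq
  have hsub : Icc p y₀ ⊆ Icc p q := Icc_subset_Icc le_rfl hy₀.2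
  have hint : ∫ z in p..y₀, h z * N z ≤ (∫ z in p..y₀, h z) * N y₀ := by
    rw [← intervalIntegral.integral_mul_const]
    exact integral_mono_on hy₀.1 (intervalIntegrable_mul_of_continuousOn hh hN hp hy₀)
      (intervalIntegrable_mul_of_continuousOn hh continuousOn_const hp hy₀)
      fun z hz => mul_le_mul_of_nonneg_left (hmax (hsub hz)) (hh0 z (hsub hz))
  have hmono : ∫ z in p..y₀, h z ≤ ∫ z in p..q, h z :=
    integral_mono_interval le_rfl hy₀.1 hy₀.2
      (ae_restrict_of_forall_mem measurableSet_Ioc fun z hz => hh0 z (Ioc_subset_Icc_self hz))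
      ((intervalIntegrable_iff_integrableOn_Icc_of_le hpq).2 hh)
  have hy₀le : N y₀ ≤ 2 * K := by
    have := mul_le_mul_of_nonneg_right (hmono.trans hsmall) (hN0 y₀ hy₀)
    linarith [hle y₀ hy₀]
  exact fun y hy => (hmax hy).trans hy₀le

/-- Gronwall's inequality, proved by cutting `[p, q]` into pieces of `h`-mass at most `1 / 2`. -/
lemma le_two_pow_mul_of_le_add_integral (n : ℕ) (hpq : p ≤ q) (hK : 0 ≤ K)
    (hh : IntegrableOn h (Icc p q)) (hh0 : ∀ z ∈ Icc p q, 0 ≤ h z)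
    (hN : ContinuousOn N (Icc p q)) (hN0 : ∀ z ∈ Icc p q, 0 ≤ N z)
    (hsmall : ∫ z in p..q, h z ≤ n / 2)
    (hle : ∀ y ∈ Icc p q, N y ≤ K + ∫ z in p..y, h z * N z) :
    ∀ y ∈ Icc p q, N y ≤ 2 ^ (n + 1) * K := by
  induction n generalizing p K with
  | zero =>
    simpa using le_two_mul_of_le_add_integral hpq hh hh0 hN hN0
      (hsmall.trans (by norm_num)) hle
  | succ n ih =>
    have hpow : 2 * K ≤ 2 ^ (n + 2) * K :=
      mul_le_mul_of_nonneg_right (le_self_pow₀ (by norm_num) (by omega)) hK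
    by_cases hhalf : ∫ z in p..q, h z ≤ 1 / 2
    · exact fun y hy => (le_two_mul_of_le_add_integral hpq hh hh0 hN hN0 hhalf hle y hy).trans hpow
    have hp : p ∈ Icc p q := left_mem_Icc.2 hpq
    have hhI : IntervalIntegrable h volume p q :=
      (intervalIntegrable_iff_integrableOn_Icc_of_le hpq).2 hh
    obtain ⟨m, hm, hmh⟩ : ∃ m ∈ Icc p q, ∫ z in p..m, h z = 1 / 2 :=
      intermediate_value_Icc hpq (continuousOn_primitive_Icc_of_le hpq hhI)
        ⟨by norm_num, (not_le.1 hhalf).le⟩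
    have hsub₁ : Icc p m ⊆ Icc p q := Icc_subset_Icc le_rfl hm.2
    have hsub₂ : Icc m q ⊆ Icc p q := Icc_subset_Icc hm.1 le_rfl
    have hleft : ∀ y ∈ Icc p m, N y ≤ 2 * K :=
      le_two_mul_of_le_add_integral hm.1 (hh.mono_set hsub₁) (fun z hz => hh0 z (hsub₁ hz))
        (hN.mono hsub₁) (fun z hz => hN0 z (hsub₁ hz)) hmh.le (fun y hy => hle y (hsub₁ hy))
    have hright : ∀ y ∈ Icc m q, N y ≤ 2 * K + ∫ z in m..y, h z * N z := by
      intro y hy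
      have hsplit := integral_add_adjacent_intervals
        (intervalIntegrable_mul_of_continuousOn hh hN hp hm)
        (intervalIntegrable_mul_of_continuousOn hh hN hm (hsub₂ hy))
      have hbound : ∫ z in p..m, h z * N z ≤ K :=
        calc ∫ z in p..m, h z * N z ≤ ∫ z in p..m, h z * (2 * K) :=
              integral_mono_on hm.1 (intervalIntegrable_mul_of_continuousOn hh hN hp hm)
                (intervalIntegrable_mul_of_continuousOn hh continuousOn_const hp hm)
                fun z hz => mul_le_mul_of_nonneg_left (hleft z hz) (hh0 z (hsub₁ hz))
          _ = K := by rw [intervalIntegral.integral_mul_const, hmh]; ring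
      linarith [hle y (hsub₂ hy)]
    have hsmall' : ∫ z in m..q, h z ≤ n / 2 := by
      have := integral_add_adjacent_intervals
        ((intervalIntegrable_iff_integrableOn_Icc_of_le hm.1).2 (hh.mono_set hsub₁))
        ((intervalIntegrable_iff_integrableOn_Icc_of_le hm.2).2 (hh.mono_set hsub₂))
      push_cast at hsmall
      linarith
    have hmq := ih hm.2 (by linarith) (hh.mono_set hsub₂) (fun z hz => hh0 z (hsub₂ hz))
      (hN.mono hsub₂) (fun z hz => hN0 z (hsub₂ hz)) hsmall' hright
    intro y hy
    rcases le_total y m with hym | hmy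
    · exact (hleft y ⟨hy.1, hym⟩).trans hpow
    · calc N y ≤ 2 ^ (n + 1) * (2 * K) := hmq y ⟨hmy, hy.2⟩
        _ = 2 ^ (n + 1 + 1) * K := by ring

end Gronwall

/-- The homogeneous equation `v'' = k₁ v - k₂ v'` as a first-order system for `(E, F) = (v, v')`,
in the integral (Carathéodory) form based at `u`. -/
def SolvesOn (k₁ k₂ E F : ℝ → ℝ) (u : ℝ) (s : Set ℝ) : Prop :=
  ∀ y ∈ s, E y = E u + ∫ z in u..y, F z ∧
    F y = F u + ∫ z in u..y, (k₁ z * E z - k₂ z * F z)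

lemma abs_add_abs_mul_sub_mul_le (a b e f : ℝ) :
    |f| + |a * e - b * f| ≤ (1 + |a| + |b|) * (|e| + |f|) := by
  have h : |a * e - b * f| ≤ |a| * |e| + |b| * |f| := by
    simpa only [abs_mul] using abs_sub (a * e) (b * f)
  nlinarith [abs_nonneg a, abs_nonneg b, abs_nonneg e, abs_nonneg f,
    mul_nonneg (abs_nonneg a) (abs_nonneg f), mul_nonneg (abs_nonneg b) (abs_nonneg e)]

lemma integrableOn_one_add_abs_add_abs {k₁ k₂ : ℝ → ℝ} {s : Set ℝ} (hs : volume s ≠ ⊤)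
    (hk₁ : IntegrableOn k₁ s) (hk₂ : IntegrableOn k₂ s) :
    IntegrableOn (fun z => 1 + |k₁ z| + |k₂ z|) s :=
  ((integrableOn_const hs).add hk₁.abs).add hk₂.abs

lemma integrableOn_Icc_comp_sub_left {k : ℝ → ℝ} {c u : ℝ} (hcu : c ≤ u)
    (hk : IntegrableOn k (Icc c u)) : IntegrableOn (fun τ => k (u - τ)) (Icc 0 (u - c)) := by
  have := ((intervalIntegrable_iff_integrableOn_Icc_of_le hcu).2 hk).comp_sub_left u
  rw [sub_self] at this
  exact (intervalIntegrable_iff_integrableOn_Icc_of_le (sub_nonneg.2 hcu)).1 this.symm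

lemma continuousOn_Icc_of_comp_sub_left {E : ℝ → ℝ} {c u : ℝ}
    (hE : ContinuousOn (fun τ => E (u - τ)) (Icc 0 (u - c))) : ContinuousOn E (Icc c u) := by
  have hmaps : MapsTo (fun y => u - y) (Icc c u) (Icc 0 (u - c)) := fun y hy =>
    ⟨by linarith [hy.2], by linarith [hy.1]⟩
  have := hE.comp (continuous_const.sub continuous_id).continuousOn hmaps
  simpa [Function.comp_def] using this

namespace SolvesOn

variable {k₁ k₂ E F : ℝ → ℝ} {u c d : ℝ} {s t : Set ℝ}

lemma mono (h : SolvesOn k₁ k₂ E F u s) (hts : t ⊆ s) : SolvesOn k₁ k₂ E F u t :=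
  fun y hy => h y (hts hy)

lemma abs_add_abs_le (hud : u ≤ d) (hk₁ : IntegrableOn k₁ (Icc u d))
    (hk₂ : IntegrableOn k₂ (Icc u d)) (hE : ContinuousOn E (Icc u d))
    (hF : ContinuousOn F (Icc u d)) (h : SolvesOn k₁ k₂ E F u (Icc u d)) :
    ∀ y ∈ Icc u d, |E y| + |F y| ≤
      |E u| + |F u| + ∫ z in u..y, (1 + |k₁ z| + |k₂ z|) * (|E z| + |F z|) := by
  intro y hy
  have hu : u ∈ Icc u d := left_mem_Icc.2 hud
  have hF' : IntervalIntegrable (fun z => |F z|) volume u y :=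
    (hF.abs.mono (uIcc_subset_Icc hu hy)).intervalIntegrable
  have hG' : IntervalIntegrable (fun z => |k₁ z * E z - k₂ z * F z|) volume u y :=
    ((intervalIntegrable_mul_of_continuousOn hk₁ hE hu hy).sub
      (intervalIntegrable_mul_of_continuousOn hk₂ hF hu hy)).abs
  have hwN : IntervalIntegrable (fun z => (1 + |k₁ z| + |k₂ z|) * (|E z| + |F z|)) volume u y :=
    intervalIntegrable_mul_of_continuousOn
      (integrableOn_one_add_abs_add_abs measure_Icc_lt_top.ne hk₁ hk₂) (hE.abs.add hF.abs) hu hy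
  have hEy : |E y| ≤ |E u| + ∫ z in u..y, |F z| := by
    rw [(h y hy).1]
    exact (abs_add_le _ _).trans (add_le_add le_rfl (abs_integral_le_integral_abs hy.1))
  have hFy : |F y| ≤ |F u| + ∫ z in u..y, |k₁ z * E z - k₂ z * F z| := by
    rw [(h y hy).2]
    exact (abs_add_le _ _).trans (add_le_add le_rfl (abs_integral_le_integral_abs hy.1))
  have hint : (∫ z in u..y, |F z|) + ∫ z in u..y, |k₁ z * E z - k₂ z * F z| ≤
      ∫ z in u..y, (1 + |k₁ z| + |k₂ z|) * (|E z| + |F z|) := by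
    rw [← integral_add hF' hG']
    exact integral_mono_on hy.1 (hF'.add hG') hwN
      fun z _ => abs_add_abs_mul_sub_mul_le (k₁ z) (k₂ z) (E z) (F z)
  linarith

lemma abs_add_abs_le_two_pow_mul {n : ℕ} {t : ℝ} (hk₁ : IntegrableOn k₁ (Icc u d))
    (hk₂ : IntegrableOn k₂ (Icc u d)) (hn : 2 * ∫ z in u..d, (1 + |k₁ z| + |k₂ z|) ≤ n)
    (ht : t ∈ Icc u d) (hE : ContinuousOn E (Icc u t)) (hF : ContinuousOn F (Icc u t))
    (h : SolvesOn k₁ k₂ E F u (Icc u t)) :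
    ∀ y ∈ Icc u t, |E y| + |F y| ≤ 2 ^ (n + 1) * (|E u| + |F u|) := by
  have hw := integrableOn_one_add_abs_add_abs measure_Icc_lt_top.ne hk₁ hk₂
  have hsub : Icc u t ⊆ Icc u d := Icc_subset_Icc le_rfl ht.2
  have hmono : ∫ z in u..t, (1 + |k₁ z| + |k₂ z|) ≤ ∫ z in u..d, (1 + |k₁ z| + |k₂ z|) :=
    integral_mono_interval le_rfl ht.1 ht.2 (ae_of_all _ fun z => by positivity)
      ((intervalIntegrable_iff_integrableOn_Icc_of_le (ht.1.trans ht.2)).2 hw)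
  exact le_two_pow_mul_of_le_add_integral (N := fun y => |E y| + |F y|) n ht.1 (by positivity)
    (hw.mono_set hsub) (fun z _ => by positivity) (hE.abs.add hF.abs) (fun z _ => by positivity)
    (by linarith) (h.abs_add_abs_le ht.1 (hk₁.mono_set hsub) (hk₂.mono_set hsub) hE hF)

lemma continuousOn_of_integrableOn (hud : u ≤ d) (h : SolvesOn k₁ k₂ E F u (Icc u d))
    (hG : IntegrableOn (fun z => k₁ z * E z - k₂ z * F z) (Ioc u d)) :
    ContinuousOn E (Icc u d) ∧ ContinuousOn F (Icc u d) := by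
  have hF : ContinuousOn F (Icc u d) :=
    (continuousOn_const.add (continuousOn_primitive_Icc_of_le hud
      ((intervalIntegrable_iff_integrableOn_Ioc_of_le hud).2 hG))).congr
      fun y hy => (h y hy).2
  refine ⟨(continuousOn_const.add (continuousOn_primitive_Icc_of_le hud ?_)).congr
    fun y hy => (h y hy).1, hF⟩
  exact (hF.mono (uIcc_of_le hud).subset).intervalIntegrable

lemma integrableOn_Ioc_of_forall_lt {b M : ℝ} (hk₁ : IntegrableOn k₁ (Icc u b))
    (hk₂ : IntegrableOn k₂ (Icc u b)) (h : SolvesOn k₁ k₂ E F u (Icc u b))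
    (hlt : ∀ t ∈ Ico u b, IntegrableOn (fun z => k₁ z * E z - k₂ z * F z) (Ioc u t))
    (hM : ∀ y ∈ Ico u b, |E y| + |F y| ≤ M) :
    IntegrableOn (fun z => k₁ z * E z - k₂ z * F z) (Ioc u b) := by
  have hcont : ∀ y ∈ Ico u b,
      ContinuousWithinAt E (Ico u b) y ∧ ContinuousWithinAt F (Ico u b) y := by
    intro y hy
    have hyt : y < (y + b) / 2 := by linarith [hy.2]
    have ht : (y + b) / 2 ∈ Ico u b := ⟨by linarith [hy.1], by linarith [hy.2]⟩
    obtain ⟨hE, hF⟩ := (h.mono (Icc_subset_Icc le_rfl ht.2.le)).continuousOn_of_integrableOn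
      ht.1 (hlt _ ht)
    have hnhds : Icc u ((y + b) / 2) ∈ 𝓝[Ico u b] y :=
      mem_nhdsWithin.2 ⟨Iio _, isOpen_Iio, hyt, fun z hz => ⟨hz.2.1, hz.1.le⟩⟩
    exact ⟨(hE y ⟨hy.1, hyt.le⟩).mono_of_mem_nhdsWithin hnhds,
      (hF y ⟨hy.1, hyt.le⟩).mono_of_mem_nhdsWithin hnhds⟩
  have hE : ContinuousOn E (Ioo u b) := fun y hy =>
    (hcont y (Ioo_subset_Ico_self hy)).1.mono Ioo_subset_Ico_self
  have hF : ContinuousOn F (Ioo u b) := fun y hy =>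
    (hcont y (Ioo_subset_Ico_self hy)).2.mono Ioo_subset_Ico_self
  have hmeas : AEStronglyMeasurable (fun z => k₁ z * E z - k₂ z * F z)
      (volume.restrict (Ioo u b)) :=
    ((hk₁.mono_set Ioo_subset_Icc_self).aestronglyMeasurable.mul
        (hE.aestronglyMeasurable measurableSet_Ioo)).sub
      ((hk₂.mono_set Ioo_subset_Icc_self).aestronglyMeasurable.mul
        (hF.aestronglyMeasurable measurableSet_Ioo))
  refine (integrableOn_Ioc_iff_integrableOn_Ioo (by simp)).2 (Integrable.mono
    (((integrableOn_one_add_abs_add_abs measure_Icc_lt_top.ne hk₁ hk₂).mono_set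
      Ioo_subset_Icc_self).mul_const M) hmeas
    (ae_restrict_of_forall_mem measurableSet_Ioo fun z hz => ?_))
  have hw : 0 ≤ 1 + |k₁ z| + |k₂ z| := by positivity
  rw [Real.norm_eq_abs, Real.norm_eq_abs, abs_mul, abs_of_nonneg hw]
  calc |k₁ z * E z - k₂ z * F z| ≤ (1 + |k₁ z| + |k₂ z|) * (|E z| + |F z|) := by
        linarith [abs_add_abs_mul_sub_mul_le (k₁ z) (k₂ z) (E z) (F z), abs_nonneg (F z)]
    _ ≤ (1 + |k₁ z| + |k₂ z|) * |M| :=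
        mul_le_mul_of_nonneg_left ((hM z ⟨hz.1.le, hz.2⟩).trans (le_abs_self M)) hw

/-- Otherwise the integral defining `F` takes the junk value `0` on all of `(b, d]`, so `F` is
constant there, which makes `k₁ E - k₂ F` integrable on `(u, d]` after all. -/
lemma exists_integrableOn_Ioc_gt {b : ℝ} (hub : u ≤ b) (hbd : b < d)
    (hk₁ : IntegrableOn k₁ (Icc u d)) (hk₂ : IntegrableOn k₂ (Icc u d))
    (h : SolvesOn k₁ k₂ E F u (Icc u d))
    (hG : IntegrableOn (fun z => k₁ z * E z - k₂ z * F z) (Ioc u b)) :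
    ∃ t ∈ Ioc b d, IntegrableOn (fun z => k₁ z * E z - k₂ z * F z) (Ioc u t) := by
  by_contra! hnot
  have hud : u ≤ d := hub.trans hbd.le
  have hFconst : ∀ t ∈ Ioc b d, F t = F u := by
    intro t ht
    have hut : u ≤ t := hub.trans ht.1.le
    rw [(h t ⟨hut, ht.2⟩).2, integral_undef fun hi =>
      hnot t ht ((intervalIntegrable_iff_integrableOn_Ioc_of_le hut).1 hi), add_zero]
  obtain ⟨-, hFb⟩ := (h.mono (Icc_subset_Icc le_rfl hbd.le)).continuousOn_of_integrableOn hub hG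
  have hmulF : ∀ φ : ℝ → ℝ, IntegrableOn φ (Icc u d) →
      IntegrableOn (fun z => φ z * F z) (Ioc u d) := by
    intro φ hφ
    rw [← Ioc_union_Ioc_eq_Ioc hub hbd.le]
    refine IntegrableOn.union ?_ ?_
    · exact ((hφ.mono_set (Icc_subset_Icc le_rfl hbd.le)).mul_continuousOn hFb
        isCompact_Icc).mono_set Ioc_subset_Icc_self
    · exact IntegrableOn.congr_fun
        ((hφ.mono_set (Ioc_subset_Icc_self.trans (Icc_subset_Icc hub le_rfl))).mul_const (F u))
        (fun z hz => by rw [hFconst z hz]) measurableSet_Ioc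
  have hF : IntegrableOn F (Ioc u d) := by
    simpa using hmulF (fun _ => 1) (integrableOn_const measure_Icc_lt_top.ne)
  have hE : ContinuousOn E (Icc u d) :=
    (continuousOn_const.add (continuousOn_primitive_Icc_of_le hud
      ((intervalIntegrable_iff_integrableOn_Ioc_of_le hud).2 hF))).congr fun y hy => (h y hy).1
  exact hnot d ⟨hbd, le_rfl⟩
    (((hk₁.mul_continuousOn hE isCompact_Icc).mono_set Ioc_subset_Icc_self).sub (hmulF k₂ hk₂))

lemma continuousOn_Icc_of_le (hud : u ≤ d) (hk₁ : IntegrableOn k₁ (Icc u d))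
    (hk₂ : IntegrableOn k₂ (Icc u d)) (h : SolvesOn k₁ k₂ E F u (Icc u d)) :
    ContinuousOn E (Icc u d) ∧ ContinuousOn F (Icc u d) := by
  obtain ⟨n, hn⟩ := exists_nat_ge (2 * ∫ z in u..d, (1 + |k₁ z| + |k₂ z|))
  have hbound : ∀ t ∈ Icc u d, IntegrableOn (fun z => k₁ z * E z - k₂ z * F z) (Ioc u t) →
      ∀ y ∈ Icc u t, |E y| + |F y| ≤ 2 ^ (n + 1) * (|E u| + |F u|) := by
    intro t ht hGt
    have ht' := h.mono (Icc_subset_Icc le_rfl ht.2)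
    obtain ⟨hE, hF⟩ := ht'.continuousOn_of_integrableOn ht.1 hGt
    exact ht'.abs_add_abs_le_two_pow_mul hk₁ hk₂ hn ht hE hF
  set S := {t | t ∈ Icc u d ∧ IntegrableOn (fun z => k₁ z * E z - k₂ z * F z) (Ioc u t)}
  have huS : u ∈ S := ⟨left_mem_Icc.2 hud, by simp⟩
  have hSbdd : BddAbove S := ⟨d, fun t ht => ht.1.2⟩
  have hub : u ≤ sSup S := le_csSup hSbdd huS
  have hbd : sSup S ≤ d := csSup_le ⟨u, huS⟩ fun t ht => ht.1.2
  have hlt : ∀ t ∈ Ico u (sSup S), IntegrableOn (fun z => k₁ z * E z - k₂ z * F z) (Ioc u t) := by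
    intro t ht
    obtain ⟨t', ht', htt'⟩ := exists_lt_of_lt_csSup ⟨u, huS⟩ ht.2
    exact ht'.2.mono_set (Ioc_subset_Ioc le_rfl htt'.le)
  have hsub : Icc u (sSup S) ⊆ Icc u d := Icc_subset_Icc le_rfl hbd
  have hGb := (h.mono hsub).integrableOn_Ioc_of_forall_lt (hk₁.mono_set hsub)
    (hk₂.mono_set hsub) hlt fun y hy =>
      hbound y ⟨hy.1, hy.2.le.trans hbd⟩ (hlt y hy) y (right_mem_Icc.2 hy.1)
  have hbd' : sSup S = d := by
    by_contra hne
    obtain ⟨t, ht, hGt⟩ := h.exists_integrableOn_Ioc_gt hub (lt_of_le_of_ne hbd hne) hk₁ hk₂ hGb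
    exact (le_csSup hSbdd ⟨⟨hub.trans ht.1.le, ht.2⟩, hGt⟩).not_gt ht.1
  rw [hbd'] at hGb
  exact h.continuousOn_of_integrableOn hud hGb

lemma eq_zero_of_le (hud : u ≤ d) (hk₁ : IntegrableOn k₁ (Icc u d))
    (hk₂ : IntegrableOn k₂ (Icc u d)) (h : SolvesOn k₁ k₂ E F u (Icc u d))
    (hEu : E u = 0) (hFu : F u = 0) : ∀ y ∈ Icc u d, E y = 0 ∧ F y = 0 := by
  obtain ⟨hE, hF⟩ := h.continuousOn_Icc_of_le hud hk₁ hk₂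
  obtain ⟨n, hn⟩ := exists_nat_ge (2 * ∫ z in u..d, (1 + |k₁ z| + |k₂ z|))
  intro y hy
  have hy0 : |E y| + |F y| ≤ 0 := by
    simpa [hEu, hFu] using h.abs_add_abs_le_two_pow_mul hk₁ hk₂ hn (right_mem_Icc.2 hud) hE hF y hy
  exact ⟨abs_nonpos_iff.1 (by linarith [abs_nonneg (F y)]),
    abs_nonpos_iff.1 (by linarith [abs_nonneg (E y)])⟩

lemma reflect (h : SolvesOn k₁ k₂ E F u (Icc c u)) :
    SolvesOn (fun τ => k₁ (u - τ)) (fun τ => -k₂ (u - τ)) (fun τ => E (u - τ))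
      (fun τ => -F (u - τ)) 0 (Icc 0 (u - c)) := by
  intro τ hτ
  have hcomp : ∀ f : ℝ → ℝ, ∫ s in (0 : ℝ)..τ, f (u - s) = -∫ z in u..u - τ, f z := fun f => by
    rw [intervalIntegral.integral_comp_sub_left, sub_zero, integral_symm]
  obtain ⟨hE, hF⟩ := h (u - τ) ⟨by linarith [hτ.2], by linarith [hτ.1]⟩
  simp only [sub_zero]
  refine ⟨by rw [intervalIntegral.integral_neg, hcomp F, hE]; ring, ?_⟩
  have hG := hcomp fun z => k₁ z * E z - k₂ z * F z
  simp only [neg_mul_neg] at hG ⊢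
  rw [hG, hF]
  ring

lemma continuousOn (hu : u ∈ Icc c d) (hk₁ : IntegrableOn k₁ (Icc c d))
    (hk₂ : IntegrableOn k₂ (Icc c d)) (h : SolvesOn k₁ k₂ E F u (Icc c d)) :
    ContinuousOn E (Icc c d) ∧ ContinuousOn F (Icc c d) := by
  have hsubr : Icc u d ⊆ Icc c d := Icc_subset_Icc hu.1 le_rfl
  have hsubl : Icc c u ⊆ Icc c d := Icc_subset_Icc le_rfl hu.2
  obtain ⟨hEr, hFr⟩ := (h.mono hsubr).continuousOn_Icc_of_le hu.2 (hk₁.mono_set hsubr)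
    (hk₂.mono_set hsubr)
  obtain ⟨hEl, hFl⟩ := (h.mono hsubl).reflect.continuousOn_Icc_of_le (sub_nonneg.2 hu.1)
    (integrableOn_Icc_comp_sub_left hu.1 (hk₁.mono_set hsubl))
    (integrableOn_Icc_comp_sub_left hu.1 (hk₂.mono_set hsubl)).neg
  rw [← Icc_union_Icc_eq_Icc hu.1 hu.2]
  exact ⟨(continuousOn_Icc_of_comp_sub_left hEl).union_of_isClosed hEr isClosed_Icc isClosed_Icc,
    (continuousOn_Icc_of_comp_sub_left (by simpa only [Pi.neg_def, neg_neg] using hFl.neg)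
      ).union_of_isClosed hFr isClosed_Icc isClosed_Icc⟩

lemma eq_zero (hu : u ∈ Icc c d) (hk₁ : IntegrableOn k₁ (Icc c d))
    (hk₂ : IntegrableOn k₂ (Icc c d)) (h : SolvesOn k₁ k₂ E F u (Icc c d))
    (hEu : E u = 0) (hFu : F u = 0) : ∀ y ∈ Icc c d, E y = 0 ∧ F y = 0 := by
  intro y hy
  rcases le_total u y with huy | hyu
  · have hsub : Icc u d ⊆ Icc c d := Icc_subset_Icc hu.1 le_rfl
    exact (h.mono hsub).eq_zero_of_le hu.2 (hk₁.mono_set hsub) (hk₂.mono_set hsub) hEu hFu y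
      ⟨huy, hy.2⟩
  · have hsub : Icc c u ⊆ Icc c d := Icc_subset_Icc le_rfl hu.2
    simpa using (h.mono hsub).reflect.eq_zero_of_le (sub_nonneg.2 hu.1)
      (integrableOn_Icc_comp_sub_left hu.1 (hk₁.mono_set hsub))
      (integrableOn_Icc_comp_sub_left hu.1 (hk₂.mono_set hsub)).neg
      (by simpa using hEu) (by simpa using hFu) (u - y) ⟨by linarith, by linarith [hy.1]⟩

lemma intervalIntegrable (hu : u ∈ Icc c d) (hk₁ : IntegrableOn k₁ (Icc c d))
    (hk₂ : IntegrableOn k₂ (Icc c d)) (h : SolvesOn k₁ k₂ E F u (Icc c d)) {p q : ℝ}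
    (hp : p ∈ Icc c d) (hq : q ∈ Icc c d) :
    IntervalIntegrable F volume p q ∧
      IntervalIntegrable (fun z => k₁ z * E z - k₂ z * F z) volume p q := by
  obtain ⟨hE, hF⟩ := h.continuousOn hu hk₁ hk₂
  exact ⟨(hF.mono (uIcc_subset_Icc hp hq)).intervalIntegrable,
    (intervalIntegrable_mul_of_continuousOn hk₁ hE hp hq).sub
      (intervalIntegrable_mul_of_continuousOn hk₂ hF hp hq)⟩

lemma rebase {w : ℝ} (hu : u ∈ Icc c d) (hw : w ∈ Icc c d) (hk₁ : IntegrableOn k₁ (Icc c d))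
    (hk₂ : IntegrableOn k₂ (Icc c d)) (h : SolvesOn k₁ k₂ E F u (Icc c d)) :
    SolvesOn k₁ k₂ E F w (Icc c d) := by
  intro y hy
  obtain ⟨hFuw, hGuw⟩ := h.intervalIntegrable hu hk₁ hk₂ hu hw
  obtain ⟨hFwy, hGwy⟩ := h.intervalIntegrable hu hk₁ hk₂ hw hy
  rw [(h y hy).1, (h y hy).2, (h w hw).1, (h w hw).2,
    ← integral_add_adjacent_intervals hFuw hFwy, ← integral_add_adjacent_intervals hGuw hGwy]
  constructor <;> ring

lemma add {E' F' : ℝ → ℝ} (hu : u ∈ Icc c d) (hk₁ : IntegrableOn k₁ (Icc c d))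
    (hk₂ : IntegrableOn k₂ (Icc c d)) (h : SolvesOn k₁ k₂ E F u (Icc c d))
    (h' : SolvesOn k₁ k₂ E' F' u (Icc c d)) :
    SolvesOn k₁ k₂ (fun y => E y + E' y) (fun y => F y + F' y) u (Icc c d) := by
  intro y hy
  obtain ⟨hF, hG⟩ := h.intervalIntegrable hu hk₁ hk₂ hu hy
  obtain ⟨hF', hG'⟩ := h'.intervalIntegrable hu hk₁ hk₂ hu hy
  have hsum : ∫ z in u..y, (k₁ z * (E z + E' z) - k₂ z * (F z + F' z)) =
      (∫ z in u..y, (k₁ z * E z - k₂ z * F z)) + ∫ z in u..y, (k₁ z * E' z - k₂ z * F' z) := by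
    rw [← integral_add hG hG']
    exact integral_congr fun z _ => by ring
  beta_reduce
  rw [hsum, integral_add hF hF', (h y hy).1, (h y hy).2, (h' y hy).1, (h' y hy).2]
  constructor <;> ring

lemma const_mul (a : ℝ) (h : SolvesOn k₁ k₂ E F u s) :
    SolvesOn k₁ k₂ (fun y => a * E y) (fun y => a * F y) u s := by
  intro y hy
  have hG : ∫ z in u..y, (k₁ z * (a * E z) - k₂ z * (a * F z)) =
      a * ∫ z in u..y, (k₁ z * E z - k₂ z * F z) := by
    rw [← intervalIntegral.integral_const_mul]
    exact integral_congr fun z _ => by ring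
  beta_reduce
  rw [hG, intervalIntegral.integral_const_mul, (h y hy).1, (h y hy).2]
  constructor <;> ring

lemma eq_mul_add_mul {E₁ F₁ E₂ F₂ : ℝ → ℝ} (hu : u ∈ Icc c d)
    (hk₁ : IntegrableOn k₁ (Icc c d)) (hk₂ : IntegrableOn k₂ (Icc c d))
    (h : SolvesOn k₁ k₂ E F u (Icc c d)) (h₁ : SolvesOn k₁ k₂ E₁ F₁ u (Icc c d))
    (h₂ : SolvesOn k₁ k₂ E₂ F₂ u (Icc c d)) (hE₁ : E₁ u = 1) (hF₁ : F₁ u = 0)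
    (hE₂ : E₂ u = 0) (hF₂ : F₂ u = 1) :
    ∀ y ∈ Icc c d, E y = E₁ y * E u + E₂ y * F u ∧ F y = F₁ y * E u + F₂ y * F u := by
  have hW := h.add hu hk₁ hk₂ <| (h₁.const_mul (-E u)).add hu hk₁ hk₂ (h₂.const_mul (-F u))
  intro y hy
  obtain ⟨hEy, hFy⟩ := hW.eq_zero hu hk₁ hk₂ (by simp [hE₁, hE₂]) (by simp [hF₁, hF₂]) y hy
  constructor <;> linarith

end SolvesOn

structure IsFundamentalSystemOn (k₁ k₂ : ℝ → ℝ) (φ₁₁ φ₁₂ φ₂₁ φ₂₂ : ℝ → ℝ → ℝ) (s : Set ℝ) :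
    Prop where
  eq₁₁ : ∀ x ∈ s, ∀ y ∈ s, φ₁₁ x y = 1 + ∫ z in x..y, φ₂₁ x z
  eq₁₂ : ∀ x ∈ s, ∀ y ∈ s, φ₁₂ x y = ∫ z in x..y, φ₂₂ x z
  eq₂₁ : ∀ x ∈ s, ∀ y ∈ s, φ₂₁ x y = ∫ z in x..y, (k₁ z * φ₁₁ x z - k₂ z * φ₂₁ x z)
  eq₂₂ : ∀ x ∈ s, ∀ y ∈ s, φ₂₂ x y = 1 + ∫ z in x..y, (k₁ z * φ₁₂ x z - k₂ z * φ₂₂ x z)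

namespace IsFundamentalSystemOn

variable {k₁ k₂ g : ℝ → ℝ} {φ₁₁ φ₁₂ φ₂₁ φ₂₂ : ℝ → ℝ → ℝ} {c d p q u x y : ℝ} {s : Set ℝ}

lemma diag (hΦ : IsFundamentalSystemOn k₁ k₂ φ₁₁ φ₁₂ φ₂₁ φ₂₂ s) (hx : x ∈ s) :
    φ₁₁ x x = 1 ∧ φ₁₂ x x = 0 ∧ φ₂₁ x x = 0 ∧ φ₂₂ x x = 1 := by
  simp [hΦ.eq₁₁ x hx x hx, hΦ.eq₁₂ x hx x hx, hΦ.eq₂₁ x hx x hx, hΦ.eq₂₂ x hx x hx]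

lemma solvesOn₁ (hΦ : IsFundamentalSystemOn k₁ k₂ φ₁₁ φ₁₂ φ₂₁ φ₂₂ s) (hx : x ∈ s) :
    SolvesOn k₁ k₂ (φ₁₁ x) (φ₂₁ x) x s := by
  obtain ⟨h₁₁, -, h₂₁, -⟩ := hΦ.diag hx
  intro y hy
  rw [h₁₁, h₂₁, zero_add]
  exact ⟨hΦ.eq₁₁ x hx y hy, hΦ.eq₂₁ x hx y hy⟩

lemma solvesOn₂ (hΦ : IsFundamentalSystemOn k₁ k₂ φ₁₁ φ₁₂ φ₂₁ φ₂₂ s) (hx : x ∈ s) :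
    SolvesOn k₁ k₂ (φ₁₂ x) (φ₂₂ x) x s := by
  obtain ⟨-, h₁₂, -, h₂₂⟩ := hΦ.diag hx
  intro y hy
  rw [h₁₂, h₂₂, zero_add]
  exact ⟨hΦ.eq₁₂ x hx y hy, hΦ.eq₂₂ x hx y hy⟩

lemma cocycle₁ (hΦ : IsFundamentalSystemOn k₁ k₂ φ₁₁ φ₁₂ φ₂₁ φ₂₂ (Icc c d))
    (hk₁ : IntegrableOn k₁ (Icc c d)) (hk₂ : IntegrableOn k₂ (Icc c d))
    (hx : x ∈ Icc c d) (hu : u ∈ Icc c d) (hy : y ∈ Icc c d) :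
    φ₁₁ x y = φ₁₁ u y * φ₁₁ x u + φ₁₂ u y * φ₂₁ x u ∧
      φ₂₁ x y = φ₂₁ u y * φ₁₁ x u + φ₂₂ u y * φ₂₁ x u := by
  obtain ⟨h₁₁, h₁₂, h₂₁, h₂₂⟩ := hΦ.diag hu
  exact ((hΦ.solvesOn₁ hx).rebase hx hu hk₁ hk₂).eq_mul_add_mul hu hk₁ hk₂ (hΦ.solvesOn₁ hu)
    (hΦ.solvesOn₂ hu) h₁₁ h₂₁ h₁₂ h₂₂ y hy

lemma cocycle₂ (hΦ : IsFundamentalSystemOn k₁ k₂ φ₁₁ φ₁₂ φ₂₁ φ₂₂ (Icc c d))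
    (hk₁ : IntegrableOn k₁ (Icc c d)) (hk₂ : IntegrableOn k₂ (Icc c d))
    (hx : x ∈ Icc c d) (hu : u ∈ Icc c d) (hy : y ∈ Icc c d) :
    φ₁₂ x y = φ₁₁ u y * φ₁₂ x u + φ₁₂ u y * φ₂₂ x u ∧
      φ₂₂ x y = φ₂₁ u y * φ₁₂ x u + φ₂₂ u y * φ₂₂ x u := by
  obtain ⟨h₁₁, h₁₂, h₂₁, h₂₂⟩ := hΦ.diag hu
  exact ((hΦ.solvesOn₂ hx).rebase hx hu hk₁ hk₂).eq_mul_add_mul hu hk₁ hk₂ (hΦ.solvesOn₁ hu)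
    (hΦ.solvesOn₂ hu) h₁₁ h₂₁ h₁₂ h₂₂ y hy

lemma det_mul_det (hΦ : IsFundamentalSystemOn k₁ k₂ φ₁₁ φ₁₂ φ₂₁ φ₂₂ (Icc c d))
    (hk₁ : IntegrableOn k₁ (Icc c d)) (hk₂ : IntegrableOn k₂ (Icc c d))
    (hx : x ∈ Icc c d) (hy : y ∈ Icc c d) :
    (φ₁₁ y x * φ₂₂ y x - φ₁₂ y x * φ₂₁ y x) * (φ₁₁ x y * φ₂₂ x y - φ₁₂ x y * φ₂₁ x y) = 1 := by
  obtain ⟨h₁₁, -⟩ := hΦ.cocycle₁ hk₁ hk₂ hx hy hx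
  obtain ⟨h₁₂, h₂₂⟩ := hΦ.cocycle₂ hk₁ hk₂ hx hy hx
  obtain ⟨d₁₁, d₁₂, -, d₂₂⟩ := hΦ.diag hx
  rw [d₁₁] at h₁₁
  rw [d₁₂] at h₁₂
  rw [d₂₂] at h₂₂
  linear_combination (-(φ₂₁ y x * φ₁₂ x y + φ₂₂ y x * φ₂₂ x y)) * h₁₁
    + (φ₂₁ y x * φ₁₁ x y + φ₂₂ y x * φ₂₁ x y) * h₁₂ - h₂₂

lemma det_pos (hΦ : IsFundamentalSystemOn k₁ k₂ φ₁₁ φ₁₂ φ₂₁ φ₂₂ (Icc c d))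
    (hk₁ : IntegrableOn k₁ (Icc c d)) (hk₂ : IntegrableOn k₂ (Icc c d))
    (hx : x ∈ Icc c d) (hy : y ∈ Icc c d) :
    0 < φ₁₁ x y * φ₂₂ x y - φ₁₂ x y * φ₂₁ x y := by
  obtain ⟨c₁₁, c₂₁⟩ := (hΦ.solvesOn₁ hx).continuousOn hx hk₁ hk₂
  obtain ⟨c₁₂, c₂₂⟩ := (hΦ.solvesOn₂ hx).continuousOn hx hk₁ hk₂
  obtain ⟨d₁₁, d₁₂, d₂₁, d₂₂⟩ := hΦ.diag hx
  by_contra! hneg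
  obtain ⟨z, hz, hz0⟩ := intermediate_value_uIcc
    (((c₁₁.mul c₂₂).sub (c₁₂.mul c₂₁)).mono (uIcc_subset_Icc hx hy))
    (mem_uIcc.2 (Or.inr ⟨hneg, by simp [d₁₁, d₁₂, d₂₁, d₂₂]⟩))
  have := hΦ.det_mul_det hk₁ hk₂ hx (uIcc_subset_Icc hx hy hz)
  simp only [Pi.sub_apply, Pi.mul_apply] at hz0
  rw [hz0, mul_zero] at this
  exact zero_ne_one this

lemma continuousOn_fst (hΦ : IsFundamentalSystemOn k₁ k₂ φ₁₁ φ₁₂ φ₂₁ φ₂₂ (Icc c d))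
    (hk₁ : IntegrableOn k₁ (Icc c d)) (hk₂ : IntegrableOn k₂ (Icc c d)) (hy : y ∈ Icc c d) :
    ContinuousOn (fun z => φ₁₂ z y) (Icc c d) ∧ ContinuousOn (fun z => φ₂₂ z y) (Icc c d) := by
  have hc : c ∈ Icc c d := left_mem_Icc.2 (hy.1.trans hy.2)
  obtain ⟨c₁₁, c₂₁⟩ := (hΦ.solvesOn₁ hc).continuousOn hc hk₁ hk₂
  obtain ⟨c₁₂, c₂₂⟩ := (hΦ.solvesOn₂ hc).continuousOn hc hk₁ hk₂
  have hdet : ContinuousOn (fun z => φ₁₁ c z * φ₂₂ c z - φ₁₂ c z * φ₂₁ c z) (Icc c d) :=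
    (c₁₁.mul c₂₂).sub (c₁₂.mul c₂₁)
  have hne : ∀ z ∈ Icc c d, φ₁₁ c z * φ₂₂ c z - φ₁₂ c z * φ₂₁ c z ≠ 0 :=
    fun z hz => (hΦ.det_pos hk₁ hk₂ hc hz).ne'
  -- Cramer's rule for the cocycle identities at `c`, `z`, `y`
  constructor
  · have hnum : ContinuousOn (fun z => φ₁₂ c y * φ₁₁ c z - φ₁₁ c y * φ₁₂ c z) (Icc c d) :=
      (continuousOn_const.mul c₁₁).sub (continuousOn_const.mul c₁₂)
    refine (hnum.div hdet hne).congr fun z hz => ?_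
    obtain ⟨h₁₁, -⟩ := hΦ.cocycle₁ hk₁ hk₂ hc hz hy
    obtain ⟨h₁₂, -⟩ := hΦ.cocycle₂ hk₁ hk₂ hc hz hy
    rw [Pi.div_apply, eq_div_iff (hne z hz)]
    linear_combination φ₁₂ c z * h₁₁ - φ₁₁ c z * h₁₂
  · have hnum : ContinuousOn (fun z => φ₂₂ c y * φ₁₁ c z - φ₂₁ c y * φ₁₂ c z) (Icc c d) :=
      (continuousOn_const.mul c₁₁).sub (continuousOn_const.mul c₁₂)
    refine (hnum.div hdet hne).congr fun z hz => ?_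
    obtain ⟨-, h₂₁⟩ := hΦ.cocycle₁ hk₁ hk₂ hc hz hy
    obtain ⟨-, h₂₂⟩ := hΦ.cocycle₂ hk₁ hk₂ hc hz hy
    rw [Pi.div_apply, eq_div_iff (hne z hz)]
    linear_combination φ₁₂ c z * h₂₁ - φ₁₁ c z * h₂₂

lemma integral_mul_eq_add (hΦ : IsFundamentalSystemOn k₁ k₂ φ₁₁ φ₁₂ φ₂₁ φ₂₂ (Icc c d))
    (hk₁ : IntegrableOn k₁ (Icc c d)) (hk₂ : IntegrableOn k₂ (Icc c d))
    (hg : IntegrableOn g (Icc c d)) (hp : p ∈ Icc c d) (hq : q ∈ Icc c d) (hx : x ∈ Icc c d) :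
    ∫ z in p..x, g z * φ₁₂ z x =
      (∫ z in p..q, g z * φ₁₂ z q) * φ₁₁ q x + (∫ z in p..q, g z * φ₂₂ z q) * φ₁₂ q x +
        ∫ z in q..x, g z * φ₁₂ z x := by
  obtain ⟨hx₁₂, -⟩ := hΦ.continuousOn_fst hk₁ hk₂ hx
  obtain ⟨hq₁₂, hq₂₂⟩ := hΦ.continuousOn_fst hk₁ hk₂ hq
  have hpq : ∫ z in p..q, g z * φ₁₂ z x =
      (∫ z in p..q, g z * φ₁₂ z q) * φ₁₁ q x + (∫ z in p..q, g z * φ₂₂ z q) * φ₁₂ q x := by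
    rw [← intervalIntegral.integral_mul_const, ← intervalIntegral.integral_mul_const,
      ← integral_add ((intervalIntegrable_mul_of_continuousOn hg hq₁₂ hp hq).mul_const _)
        ((intervalIntegrable_mul_of_continuousOn hg hq₂₂ hp hq).mul_const _)]
    refine integral_congr fun z hz => ?_
    simp only [(hΦ.cocycle₂ hk₁ hk₂ (uIcc_subset_Icc hp hq hz) hq hx).1]
    ring
  rw [← integral_add_adjacent_intervals (intervalIntegrable_mul_of_continuousOn hg hx₁₂ hp hq)
    (intervalIntegrable_mul_of_continuousOn hg hx₁₂ hq hx), hpq]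

lemma mul_sub_mul_eq (hΦ : IsFundamentalSystemOn k₁ k₂ φ₁₁ φ₁₂ φ₂₁ φ₂₂ (Icc c d))
    (hk₁ : IntegrableOn k₁ (Icc c d)) (hk₂ : IntegrableOn k₂ (Icc c d))
    (hp : p ∈ Icc c d) (hx : x ∈ Icc c d) (hq : q ∈ Icc c d) :
    φ₁₂ p q * φ₁₁ p x - φ₁₁ p q * φ₁₂ p x =
      φ₁₂ x q * (φ₁₁ p x * φ₂₂ p x - φ₁₂ p x * φ₂₁ p x) := by
  rw [(hΦ.cocycle₁ hk₁ hk₂ hp hx hq).1, (hΦ.cocycle₂ hk₁ hk₂ hp hx hq).1]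
  ring

end IsFundamentalSystemOn

/-- The paper's `v^{[p,q]}`, for `g = 2Π/σ²`. -/
noncomputable def bvpSol (g : ℝ → ℝ) (φ₁₂ : ℝ → ℝ → ℝ) (p q x : ℝ) : ℝ :=
  (∫ z in p..q, g z * φ₁₂ z q) / φ₁₂ p q * φ₁₂ p x - ∫ z in p..x, g z * φ₁₂ z x

section BVP

variable {k₁ k₂ g : ℝ → ℝ} {φ₁₁ φ₁₂ φ₂₁ φ₂₂ : ℝ → ℝ → ℝ} {c d p p' q : ℝ}

lemma bvpSol_left (h : φ₁₂ p p = 0) : bvpSol g φ₁₂ p q p = 0 := by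
  simp [bvpSol, h]

lemma bvpSol_right (h : φ₁₂ p q ≠ 0) : bvpSol g φ₁₂ p q q = 0 := by
  simp [bvpSol, div_mul_cancel₀ _ h]

lemma exists_bvpSol_sub_bvpSol_eq_mul_left (g : ℝ → ℝ) (φ₁₂ : ℝ → ℝ → ℝ) (p q q' : ℝ) :
    ∃ C, ∀ x, bvpSol g φ₁₂ p q x - bvpSol g φ₁₂ p q' x = C * φ₁₂ p x :=
  ⟨(∫ z in p..q, g z * φ₁₂ z q) / φ₁₂ p q - (∫ z in p..q', g z * φ₁₂ z q') / φ₁₂ p q',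
    fun x => by unfold bvpSol; ring⟩

lemma IsFundamentalSystemOn.exists_bvpSol_sub_bvpSol_eq_mul_right
    (hΦ : IsFundamentalSystemOn k₁ k₂ φ₁₁ φ₁₂ φ₂₁ φ₂₂ (Icc c d))
    (hk₁ : IntegrableOn k₁ (Icc c d)) (hk₂ : IntegrableOn k₂ (Icc c d))
    (hg : IntegrableOn g (Icc c d)) (hp : p ∈ Icc c d) (hp' : p' ∈ Icc c d) (hq : q ∈ Icc c d)
    (hpq : φ₁₂ p q ≠ 0) (hp'q : φ₁₂ p' q ≠ 0) :
    ∃ C, ∀ x ∈ Icc c d, bvpSol g φ₁₂ p q x - bvpSol g φ₁₂ p' q x =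
      C * (φ₁₂ p' q * φ₁₁ p' x - φ₁₁ p' q * φ₁₂ p' x) := by
  set A := (∫ z in p..q, g z * φ₁₂ z q) / φ₁₂ p q * φ₁₂ p p' - ∫ z in p..p', g z * φ₁₂ z p'
  set B := (∫ z in p..q, g z * φ₁₂ z q) / φ₁₂ p q * φ₂₂ p p' -
    (∫ z in p'..q, g z * φ₁₂ z q) / φ₁₂ p' q - ∫ z in p..p', g z * φ₂₂ z p'
  have hdiff : ∀ x ∈ Icc c d,
      bvpSol g φ₁₂ p q x - bvpSol g φ₁₂ p' q x = A * φ₁₁ p' x + B * φ₁₂ p' x := by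
    intro x hx
    unfold bvpSol
    rw [hΦ.integral_mul_eq_add hk₁ hk₂ hg hp hp' hx, (hΦ.cocycle₂ hk₁ hk₂ hp hp' hx).1]
    ring
  have hq0 : A * φ₁₁ p' q + B * φ₁₂ p' q = 0 := by
    rw [← hdiff q hq, bvpSol_right hpq, bvpSol_right hp'q, sub_zero]
  refine ⟨A / φ₁₂ p' q, fun x hx => ?_⟩
  rw [hdiff x hx, div_mul_eq_mul_div, eq_div_iff hp'q]
  linear_combination φ₁₂ p' x * hq0

end BVP

lemma max_lt_of_sub_eq_mul {a a' b b' Δ C : ℝ} {f ψ v₁ v₂ v : ℝ → ℝ}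
    (h1 : a < a') (h2 : a' < b) (h3 : b < b')
    (hv₁ : ∀ x ∈ Icc a b', v x - v₁ x = Δ * f x) (hv₂ : ∀ x ∈ Icc a b', v x - v₂ x = C * ψ x)
    (hv₁b : v₁ b = 0) (hv₂a' : v₂ a' = 0)
    (hf : ∀ x ∈ Ioo a b', 0 < f x) (hψ : ∀ x ∈ Ioo a b', 0 < ψ x)
    (hdet : 0 < f b * ψ a' - f a' * ψ b)
    (hpos₁ : ∀ x ∈ Ioo a b, 0 < v₁ x) (hpos₂ : ∀ x ∈ Ioo a' b', 0 < v₂ x) :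
    ∀ x ∈ Ioo a b', max (v₁ x) (v₂ x) < v x ∧ 0 < v x := by
  have ha' : a' ∈ Ioo a b' := ⟨h1, h2.trans h3⟩
  have hb : b ∈ Ioo a b' := ⟨h1.trans h2, h3⟩
  have hv₂b := hpos₂ b ⟨h2, h3⟩
  have hv₁a' := hpos₁ a' ⟨h1, h2⟩
  have eb : Δ * f b - C * ψ b = v₂ b := by
    linarith [hv₁ b (Ioo_subset_Icc_self hb), hv₂ b (Ioo_subset_Icc_self hb)]
  have ea' : C * ψ a' - Δ * f a' = v₁ a' := by
    linarith [hv₁ a' (Ioo_subset_Icc_self ha'), hv₂ a' (Ioo_subset_Icc_self ha')]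
  have hΔ : 0 < Δ := by
    have key : Δ * (f b * ψ a' - f a' * ψ b) = ψ a' * v₂ b + ψ b * v₁ a' := by
      linear_combination ψ a' * eb + ψ b * ea'
    have := add_pos (mul_pos (hψ a' ha') hv₂b) (mul_pos (hψ b hb) hv₁a')
    exact pos_of_mul_pos_left (key ▸ this) hdet.le
  have hC : 0 < C := by
    have key : C * (f b * ψ a' - f a' * ψ b) = f a' * v₂ b + f b * v₁ a' := by
      linear_combination f a' * eb + f b * ea'
    have := add_pos (mul_pos (hf a' ha') hv₂b) (mul_pos (hf b hb) hv₁a')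
    exact pos_of_mul_pos_left (key ▸ this) hdet.le
  intro x hx
  have hlt₁ : v₁ x < v x := by linarith [hv₁ x (Ioo_subset_Icc_self hx), mul_pos hΔ (hf x hx)]
  have hlt₂ : v₂ x < v x := by linarith [hv₂ x (Ioo_subset_Icc_self hx), mul_pos hC (hψ x hx)]
  refine ⟨max_lt hlt₁ hlt₂, ?_⟩
  rcases lt_or_ge x b with hxb | hbx
  · exact (hpos₁ x ⟨hx.1, hxb⟩).trans hlt₁
  · exact (hpos₂ x ⟨h2.trans_le hbx, hx.2⟩).trans hlt₂

lemma IsFundamentalSystemOn.max_bvpSol_lt_bvpSol {k₁ k₂ g : ℝ → ℝ}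
    {φ₁₁ φ₁₂ φ₂₁ φ₂₂ : ℝ → ℝ → ℝ} {a a' b b' : ℝ}
    (hΦ : IsFundamentalSystemOn k₁ k₂ φ₁₁ φ₁₂ φ₂₁ φ₂₂ (Icc a b'))
    (hk₁ : IntegrableOn k₁ (Icc a b')) (hk₂ : IntegrableOn k₂ (Icc a b'))
    (hg : IntegrableOn g (Icc a b'))
    (hφpos : ∀ x ∈ Icc a b', ∀ y ∈ Icc a b', x < y → 0 < φ₁₂ x y)
    (h1 : a < a') (h2 : a' < b) (h3 : b < b')
    (hpos₁ : ∀ x ∈ Ioo a b, 0 < bvpSol g φ₁₂ a b x)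
    (hpos₂ : ∀ x ∈ Ioo a' b', 0 < bvpSol g φ₁₂ a' b' x) :
    ∀ x ∈ Ioo a b', max (bvpSol g φ₁₂ a b x) (bvpSol g φ₁₂ a' b' x) < bvpSol g φ₁₂ a b' x ∧
      0 < bvpSol g φ₁₂ a b' x := by
  have hab' : a < b' := h1.trans (h2.trans h3)
  have ha : a ∈ Icc a b' := ⟨le_rfl, hab'.le⟩
  have ha' : a' ∈ Icc a b' := ⟨h1.le, (h2.trans h3).le⟩
  have hb : b ∈ Icc a b' := ⟨(h1.trans h2).le, h3.le⟩
  have hb' : b' ∈ Icc a b' := ⟨hab'.le, le_rfl⟩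
  obtain ⟨Δ, hΔ⟩ := exists_bvpSol_sub_bvpSol_eq_mul_left g φ₁₂ a b' b
  obtain ⟨C, hC⟩ := hΦ.exists_bvpSol_sub_bvpSol_eq_mul_right hk₁ hk₂ hg ha ha' hb'
    (hφpos a ha b' hb' hab').ne' (hφpos a' ha' b' hb' (h2.trans h3)).ne'
  have hψ : ∀ x ∈ Ioo a b', 0 < φ₁₂ a' b' * φ₁₁ a' x - φ₁₁ a' b' * φ₁₂ a' x := fun x hx => by
    rw [hΦ.mul_sub_mul_eq hk₁ hk₂ ha' (Ioo_subset_Icc_self hx) hb']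
    exact mul_pos (hφpos x (Ioo_subset_Icc_self hx) b' hb' hx.2)
      (hΦ.det_pos hk₁ hk₂ ha' (Ioo_subset_Icc_self hx))
  obtain ⟨d₁₁, d₁₂, -, -⟩ := hΦ.diag ha'
  refine max_lt_of_sub_eq_mul h1 h2 h3 (fun x _ => hΔ x) hC
    (bvpSol_right (hφpos a ha b hb (h1.trans h2)).ne') (bvpSol_left d₁₂)
    (fun x hx => hφpos a ha x (Ioo_subset_Icc_self hx) hx.1) hψ ?_ hpos₁ hpos₂
  have hdet : φ₁₂ a b * (φ₁₂ a' b' * φ₁₁ a' a' - φ₁₁ a' b' * φ₁₂ a' a') -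
      φ₁₂ a a' * (φ₁₂ a' b' * φ₁₁ a' b - φ₁₁ a' b' * φ₁₂ a' b) = φ₁₂ a' b * φ₁₂ a b' := by
    rw [d₁₁, d₁₂, (hΦ.cocycle₂ hk₁ hk₂ ha ha' hb).1, (hΦ.cocycle₂ hk₁ hk₂ ha ha' hb').1]
    ring
  rw [hdet]
  exact mul_pos (hφpos a' ha' b hb h2) (hφpos a ha b' hb' hab')

end BVPFusion

open BVPFusion

theorem stmt_16_general
    (I : Set ℝ) (hIconn : I.OrdConnected)
    (α r σ : ℝ → ℝ)
    (hint2 : MeasureTheory.LocallyIntegrableOn (fun z => α z / (σ z) ^ 2) I)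
    (hint3 : MeasureTheory.LocallyIntegrableOn (fun z => r z / (σ z) ^ 2) I)
    (φ11 φ12 φ21 φ22 : ℝ → ℝ → ℝ)
    (hφ11 : ∀ x ∈ I, ∀ y ∈ I, φ11 x y = 1 + ∫ z in x..y, φ21 x z)
    (hφ12 : ∀ x ∈ I, ∀ y ∈ I, φ12 x y = ∫ z in x..y, φ22 x z)
    (hφ21 : ∀ x ∈ I, ∀ y ∈ I, φ21 x y =
      ∫ z in x..y, (2 * r z / (σ z) ^ 2 * φ11 x z - 2 * α z / (σ z) ^ 2 * φ21 x z))
    (hφ22 : ∀ x ∈ I, ∀ y ∈ I, φ22 x y = 1 +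
      ∫ z in x..y, (2 * r z / (σ z) ^ 2 * φ12 x z - 2 * α z / (σ z) ^ 2 * φ22 x z))
    (Prof : ℝ → ℝ)
    (hPint : MeasureTheory.LocallyIntegrableOn (fun z => Prof z / (σ z) ^ 2) I)
    (hφpos : ∀ x ∈ I, ∀ y ∈ I, x < y → 0 < φ12 x y)
    (vab : ℝ → ℝ → ℝ → ℝ)
    (hvab : ∀ p q x : ℝ, vab p q x =
      (∫ z in p..q, 2 * Prof z / (σ z) ^ 2 * φ12 z q) / φ12 p q * φ12 p x
        - ∫ z in p..x, 2 * Prof z / (σ z) ^ 2 * φ12 z x)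
    (a a' b b' : ℝ) (ha : a ∈ I) (hb' : b' ∈ I)
    (h1 : a < a') (h2 : a' < b) (h3 : b < b')
    (hpos1 : ∀ x ∈ Set.Ioo a b, 0 < vab a b x)
    (hpos2 : ∀ x ∈ Set.Ioo a' b', 0 < vab a' b' x) :
    ∀ x ∈ Set.Ioo a b',
      max (vab a b x) (vab a' b' x) < vab a b' x ∧ 0 < vab a b' x := by
  have hJ : Icc a b' ⊆ I := hIconn.out ha hb'
  have hint : ∀ f : ℝ → ℝ, LocallyIntegrableOn (fun z => f z / σ z ^ 2) I →
      IntegrableOn (fun z => 2 * f z / σ z ^ 2) (Icc a b') := fun f hf =>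
    IntegrableOn.congr_fun ((hf.integrableOn_compact_subset hJ isCompact_Icc).const_mul 2)
      (fun z _ => by ring) measurableSet_Icc
  have hΦ : IsFundamentalSystemOn (fun z => 2 * r z / σ z ^ 2) (fun z => 2 * α z / σ z ^ 2)
      φ11 φ12 φ21 φ22 (Icc a b') :=
    ⟨fun x hx y hy => hφ11 x (hJ hx) y (hJ hy), fun x hx y hy => hφ12 x (hJ hx) y (hJ hy),
      fun x hx y hy => hφ21 x (hJ hx) y (hJ hy), fun x hx y hy => hφ22 x (hJ hx) y (hJ hy)⟩
  obtain rfl : vab = bvpSol (fun z => 2 * Prof z / σ z ^ 2) φ12 := funext₃ hvab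
  exact hΦ.max_bvpSol_lt_bvpSol (hint r hint3) (hint α hint2) (hint Prof hPint)
    (fun x hx y hy => hφpos x (hJ hx) y (hJ hy)) h1 h2 h3 hpos1 hpos2

/-- Fusion of intervals: if [a,b] and [a',b'] overlap (a < a' < b < b') and the
two-point boundary-value solutions v^{[a,b]}, v^{[a',b']} are strictly positive
on the respective open intervals, then v^{[a,b']} > max(v^{[a,b]}, v^{[a',b']})
on (a,b'); in particular v^{[a,b']} > 0 on (a,b'). -/
theorem stmt_16
    (I : Set ℝ) (hI : IsOpen I) (hIconn : I.OrdConnected)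
    (α r σ : ℝ → ℝ)
    (hmα : Measurable α) (hmr : Measurable r) (hmσ : Measurable σ)
    (hσpos : ∀ x ∈ I, 0 < σ x)
    (hint1 : MeasureTheory.LocallyIntegrableOn (fun z => 1 / (σ z) ^ 2) I)
    (hint2 : MeasureTheory.LocallyIntegrableOn (fun z => α z / (σ z) ^ 2) I)
    (hint3 : MeasureTheory.LocallyIntegrableOn (fun z => r z / (σ z) ^ 2) I)
    (φ11 φ12 φ21 φ22 : ℝ → ℝ → ℝ)
    (hφ11 : ∀ x ∈ I, ∀ y ∈ I, φ11 x y = 1 + ∫ z in x..y, φ21 x z)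
    (hφ12 : ∀ x ∈ I, ∀ y ∈ I, φ12 x y = ∫ z in x..y, φ22 x z)
    (hφ21 : ∀ x ∈ I, ∀ y ∈ I, φ21 x y =
      ∫ z in x..y, (2 * r z / (σ z) ^ 2 * φ11 x z - 2 * α z / (σ z) ^ 2 * φ21 x z))
    (hφ22 : ∀ x ∈ I, ∀ y ∈ I, φ22 x y = 1 +
      ∫ z in x..y, (2 * r z / (σ z) ^ 2 * φ12 x z - 2 * α z / (σ z) ^ 2 * φ22 x z))
    (Prof : ℝ → ℝ) (hmP : Measurable Prof)
    (hPint : MeasureTheory.LocallyIntegrableOn (fun z => Prof z / (σ z) ^ 2) I)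
    (hφpos : ∀ x ∈ I, ∀ y ∈ I, x < y → 0 < φ12 x y)
    (vab : ℝ → ℝ → ℝ → ℝ)
    (hvab : ∀ p q x : ℝ, vab p q x =
      (∫ z in p..q, 2 * Prof z / (σ z) ^ 2 * φ12 z q) / φ12 p q * φ12 p x
        - ∫ z in p..x, 2 * Prof z / (σ z) ^ 2 * φ12 z x)
    (a a' b b' : ℝ) (ha : a ∈ I) (ha' : a' ∈ I) (hb : b ∈ I) (hb' : b' ∈ I)
    (h1 : a < a') (h2 : a' < b) (h3 : b < b')
    (hpos1 : ∀ x ∈ Set.Ioo a b, 0 < vab a b x)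
    (hpos2 : ∀ x ∈ Set.Ioo a' b', 0 < vab a' b' x) :
    ∀ x ∈ Set.Ioo a b',
      max (vab a b x) (vab a' b' x) < vab a b' x ∧ 0 < vab a b' x :=
  stmt_16_general I hIconn α r σ hint2 hint3 φ11 φ12 φ21 φ22 hφ11 hφ12 hφ21 hφ22 Prof hPint hφpos
    vab hvab a a' b b' ha hb' h1 h2 h3 hpos1 hpos2
end

section
/- Let φ₁₂ be the (1,2) entry of the fundamental matrix of w' = A(y)w with A = [[0,1],[2r/σ², −2α/σ²]] on I, and assume φ₁₂(a,x) > 0 for all x ∈ (a,b] where [a,b] ⊂ I is compact. Then for the two-point boundary problem on [a, b−ε] (ε ∈ (0, b−a)) with non-negative data g (g/σ² locally integrable, g not a.e. zero on [a,b']) the solution v_ε(x) = (∫ₐ^{b−ε}(2g/σ²)φ₁₂(z,b−ε)dz / φ₁₂(a,b−ε)) φ₁₂(a,x) − ∫ₐˣ(2g/σ²)φ₁₂(z,x)dz satisfies: if φ₁₂(a,b) = 0 and ∫ₐᵇ g(z)φ₁₂(z,b)/σ(z)² dz > 0, then lim_{ε→0⁺} v_ε(x) = +∞ for every x ∈ (a,b).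 -/
/-!
Write `P = 2r/σ²` and `Q = 2α/σ²`. The hypotheses describe the columns of the fundamental matrix
only through integral equations whose integrals could a priori be junk values. An integral Gronwall
inequality (proved by cutting the interval into pieces on which `1 + |P| + |Q|` has mass at most
`1/2`) shows that they are genuine absolutely continuous solutions of `u' = v`, `v' = P u - Q v`,
and that a solution is determined by its value at any single point. Hence the Wronskian `W` of the
two columns based at `a` never vanishes on `[a, b]`, and comparing initial data at `z` gives
`W(z) φ₁₂(z, y) = φ₁₁(a, z) φ₁₂(a, y) - φ₁₂(a, z) φ₁₁(a, y)`. This separated form makes the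
numerator `y ↦ ∫ₐʸ (2g/σ²)(z) φ₁₂(z, y) dz` continuous up to `y = b`, where it equals
`2 ∫ₐᵇ g φ₁₂(·, b)/σ² > 0`, while the denominator `φ₁₂(a, b - ε)` tends to `0` through positive
values.
-/

open MeasureTheory Set Filter Topology intervalIntegral
open scoped Interval

theorem MeasureTheory.IntegrableOn.intervalIntegrable_of_mem {E : Type*} [NormedAddCommGroup E]
    {f : ℝ → E} {p q x y : ℝ}
    (hf : IntegrableOn f (Icc p q)) (hx : x ∈ Icc p q) (hy : y ∈ Icc p q) :
    IntervalIntegrable f volume x y :=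
  (hf.mono_set (uIcc_subset_Icc hx hy)).intervalIntegrable

section Gronwall

variable {ρ m : ℝ → ℝ}

theorem add_integral_mul_le_two_mul {s t R : ℝ} (hst : s ≤ t)
    (hρ : IntegrableOn ρ (Icc s t)) (hρ0 : ∀ τ ∈ Icc s t, 0 ≤ ρ τ)
    (hm : ContinuousOn m (Icc s t)) (hm0 : ∀ τ ∈ Icc s t, 0 ≤ m τ)
    (hhalf : ∫ τ in s..t, ρ τ ≤ 1 / 2)
    (hle : ∀ τ ∈ Icc s t, m τ ≤ R + ∫ x in s..τ, ρ x * m x) :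
    R + ∫ x in s..t, ρ x * m x ≤ 2 * R := by
  obtain ⟨τ₀, hτ₀, hmax⟩ := isCompact_Icc.exists_isMaxOn (nonempty_Icc.2 hst) hm
  have hs : s ∈ Icc s t := left_mem_Icc.2 hst
  have hρm : IntegrableOn (fun x => ρ x * m x) (Icc s t) := hρ.mul_continuousOn hm isCompact_Icc
  have hρ0' : 0 ≤ᵐ[volume.restrict (Ioc s t)] ρ :=
    (ae_restrict_mem measurableSet_Ioc).mono fun x hx => hρ0 x (Ioc_subset_Icc_self hx)
  have hhalf_max : ∀ τ ∈ Icc s t, ∫ x in s..τ, ρ x * m x ≤ m τ₀ / 2 := by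
    intro τ hτ
    have hsub : uIcc s τ ⊆ Icc s t := uIcc_subset_Icc hs hτ
    calc ∫ x in s..τ, ρ x * m x ≤ ∫ x in s..τ, ρ x * m τ₀ :=
          integral_mono_on hτ.1 (hρm.intervalIntegrable_of_mem hs hτ)
            ((hρ.intervalIntegrable_of_mem hs hτ).mul_const _) fun x hx =>
            mul_le_mul_of_nonneg_left (hmax (hsub (Icc_subset_uIcc hx)))
              (hρ0 x (hsub (Icc_subset_uIcc hx)))
      _ = (∫ x in s..τ, ρ x) * m τ₀ := integral_mul_const _ _
      _ ≤ 1 / 2 * m τ₀ := by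
          refine mul_le_mul_of_nonneg_right ((integral_mono_interval le_rfl hτ.1 hτ.2 hρ0'
            (hρ.intervalIntegrable_of_mem hs ⟨hst, le_rfl⟩)).trans hhalf) (hm0 τ₀ hτ₀)
      _ = m τ₀ / 2 := by ring
  linarith [hle τ₀ hτ₀, hhalf_max τ₀ hτ₀, hhalf_max t ⟨hst, le_rfl⟩]

theorem le_two_pow_mul_of_le_add_integral_left {p q C : ℝ} {n : ℕ}
    (hρ : IntegrableOn ρ (Icc p q)) (hρ0 : ∀ t ∈ Icc p q, 0 ≤ ρ t)
    (hm : ContinuousOn m (Icc p q)) (hm0 : ∀ t ∈ Icc p q, 0 ≤ m t)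
    (hle : ∀ t ∈ Icc p q, m t ≤ C + ∫ s in p..t, ρ s * m s)
    (hn : ∫ s in p..q, ρ s ≤ n / 2) :
    ∀ t ∈ Icc p q, m t ≤ 2 ^ (n + 1) * C := by
  intro t ht
  have hp : p ∈ Icc p q := left_mem_Icc.2 (ht.1.trans ht.2)
  have hq : q ∈ Icc p q := right_mem_Icc.2 (ht.1.trans ht.2)
  set F := fun t => ∫ s in p..t, ρ s with hF
  set R := fun t => C + ∫ s in p..t, ρ s * m s with hR
  have hρm : IntegrableOn (fun x => ρ x * m x) (Icc p q) := hρ.mul_continuousOn hm isCompact_Icc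
  have hsplit : ∀ s ∈ Icc p q, ∀ t ∈ Icc s q, F t - F s ≤ 1 / 2 → R t ≤ 2 * R s := by
    intro s hs t ht hFst
    have hsub : Icc s t ⊆ Icc p q := Icc_subset_Icc hs.1 ht.2
    have hRadd : ∀ τ ∈ Icc s t, R τ = R s + ∫ x in s..τ, ρ x * m x := fun τ hτ => by
      simp only [hR, add_assoc, integral_add_adjacent_intervals
        (hρm.intervalIntegrable_of_mem hp hs) (hρm.intervalIntegrable_of_mem hs (hsub hτ))]
    rw [hRadd t ⟨ht.1, le_rfl⟩]
    refine add_integral_mul_le_two_mul ht.1 (hρ.mono_set hsub) (fun τ hτ => hρ0 τ (hsub hτ))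
      (hm.mono hsub) (fun τ hτ => hm0 τ (hsub hτ)) ?_ fun τ hτ => (hRadd τ hτ) ▸ hle τ (hsub hτ)
    rwa [← integral_interval_sub_left (hρ.intervalIntegrable_of_mem hp (hsub ⟨ht.1, le_rfl⟩))
      (hρ.intervalIntegrable_of_mem hp hs)]
  have hFcont : ContinuousOn F (Icc p q) := by
    simpa only [uIcc_of_le hq.1] using
      continuousOn_primitive_interval' (hρ.intervalIntegrable_of_mem hp hq) left_mem_uIcc
  have hR_le : ∀ k : ℕ, ∀ t ∈ Icc p q, F t ≤ k / 2 → R t ≤ 2 ^ (k + 1) * C := by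
    intro k
    induction k with
    | zero =>
      intro t ht hFt
      simpa [hR] using hsplit p hp t ht (by simp [hF] at hFt ⊢; linarith)
    | succ k ih =>
      intro t ht hFt
      obtain ⟨s, hs, hFs⟩ : ∃ s ∈ Icc p t, F s = min (F t) (k / 2) :=
        intermediate_value_Icc ht.1 (hFcont.mono (Icc_subset_Icc le_rfl ht.2))
          ⟨by simp only [hF, integral_same, le_min_iff]
              exact ⟨integral_nonneg ht.1 fun u hu => hρ0 u ⟨hu.1, hu.2.trans ht.2⟩,
                by positivity⟩,
            min_le_left _ _⟩
      have hsq : s ∈ Icc p q := ⟨hs.1, hs.2.trans ht.2⟩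
      calc R t ≤ 2 * R s := hsplit s hsq t ⟨hs.2, ht.2⟩ (by
            push_cast at hFt
            rcases min_choice (F t) (k / 2) with h | h <;> rw [h] at hFs <;> linarith)
        _ ≤ 2 * (2 ^ (k + 1) * C) := by gcongr; exact ih s hsq (hFs ▸ min_le_right _ _)
        _ = 2 ^ (k + 1 + 1) * C := by ring
  refine (hle t ht).trans (hR_le n t ht (le_trans ?_ hn))
  exact integral_mono_interval le_rfl ht.1 ht.2
    ((ae_restrict_mem measurableSet_Ioc).mono fun x hx => hρ0 x (Ioc_subset_Icc_self hx))
    (hρ.intervalIntegrable_of_mem hp hq)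

theorem le_two_pow_mul_of_le_add_integral_right {p q C : ℝ} {n : ℕ}
    (hρ : IntegrableOn ρ (Icc p q)) (hρ0 : ∀ t ∈ Icc p q, 0 ≤ ρ t)
    (hm : ContinuousOn m (Icc p q)) (hm0 : ∀ t ∈ Icc p q, 0 ≤ m t)
    (hle : ∀ t ∈ Icc p q, m t ≤ C + ∫ s in t..q, ρ s * m s)
    (hn : ∫ s in p..q, ρ s ≤ n / 2) :
    ∀ t ∈ Icc p q, m t ≤ 2 ^ (n + 1) * C := by
  have hmem : ∀ {t : ℝ}, t ∈ Icc (-q) (-p) → -t ∈ Icc p q := fun ht =>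
    ⟨le_neg.2 ht.2, neg_le.2 ht.1⟩
  intro t ht
  simpa using le_two_pow_mul_of_le_add_integral_left (ρ := fun t => ρ (-t))
    (m := fun t => m (-t)) (C := C) (n := n) (p := -q) (q := -p)
    (by simpa [Function.comp_def] using
      ((Measure.measurePreserving_neg volume).integrableOn_comp_preimage
        (Homeomorph.neg ℝ).measurableEmbedding).2 hρ)
    (fun t ht => hρ0 _ (hmem ht)) (hm.comp continuousOn_neg fun t ht => hmem ht)
    (fun t ht => hm0 _ (hmem ht))
    (fun t ht => by simpa [integral_comp_neg (fun s => ρ s * m s)] using hle _ (hmem ht))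
    (by simpa [integral_comp_neg ρ] using hn) (-t) ⟨neg_le_neg ht.2, neg_le_neg ht.1⟩

end Gronwall

theorem continuousOn_integral_of_integrableOn_Icc {f : ℝ → ℝ} {p q : ℝ}
    (hf : IntegrableOn f (Icc p q)) : ContinuousOn (fun y => ∫ s in p..y, f s) (Icc p q) := by
  intro y hy
  have hpq : p ≤ q := hy.1.trans hy.2
  have hprim := continuousOn_primitive_interval' (μ := volume)
    (hf.intervalIntegrable_of_mem ⟨le_rfl, hpq⟩ ⟨hpq, le_rfl⟩) left_mem_uIcc
  rw [uIcc_of_le hpq] at hprim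
  exact hprim y hy

theorem continuousOn_of_forall_eq_add_integral {f g : ℝ → ℝ} {p q c : ℝ}
    (hf : IntegrableOn f (Icc p q)) (hg : ∀ y ∈ Icc p q, g y = c + ∫ s in p..y, f s) :
    ContinuousOn g (Icc p q) :=
  (continuousOn_const.add (continuousOn_integral_of_integrableOn_Icc hf)).congr hg

theorem eq_add_integral_of_forall_eq_add_integral {f g : ℝ → ℝ} {p q c : ℝ}
    (hf : IntegrableOn f (Icc p q)) (hg : ∀ y ∈ Icc p q, g y = c + ∫ s in p..y, f s)
    {x y : ℝ} (hx : x ∈ Icc p q) (hy : y ∈ Icc p q) : g y = g x + ∫ s in x..y, f s := by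
  have hp : p ∈ Icc p q := ⟨le_rfl, hx.1.trans hx.2⟩
  rw [hg y hy, hg x hx, ← integral_interval_sub_left (hf.intervalIntegrable_of_mem hp hy)
    (hf.intervalIntegrable_of_mem hp hx)]
  ring

theorem aestronglyMeasurable_restrict_Icc_of_continuousOn {v : ℝ → ℝ} {T : Set ℝ} {p q c : ℝ}
    (hTpq : T ⊆ Icc p q) (hT : ∀ y ∈ T, Icc p y ⊆ T) (hv : ∀ y ∈ T, ContinuousOn v (Icc p y))
    (hc : ∀ y ∈ Icc p q \ T, v y = c) : AEStronglyMeasurable v (volume.restrict (Icc p q)) := by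
  have hTmeas : MeasurableSet T :=
    (OrdConnected.mk fun x hx y hy z hz => hT y hy ⟨(hTpq hx).1.trans hz.1, hz.2⟩).measurableSet
  have hcont : ContinuousOn v T := by
    intro t ht
    by_cases hright : ∃ y ∈ T, t < y
    · obtain ⟨y, hyT, hty⟩ := hright
      refine (hv y hyT t ⟨(hTpq ht).1, hty.le⟩).mono_of_mem_nhdsWithin ?_
      exact mem_nhdsWithin.2 ⟨Iio y, isOpen_Iio, hty, fun z hz => ⟨(hTpq hz.2).1, hz.1.le⟩⟩
    · push Not at hright
      exact (hv t ht t ⟨(hTpq ht).1, le_rfl⟩).mono fun z hz => ⟨(hTpq hz).1, hright z hz⟩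
  have hout : AEStronglyMeasurable v (volume.restrict (Icc p q \ T)) :=
    aestronglyMeasurable_const.congr <|
      (ae_restrict_mem (measurableSet_Icc.diff hTmeas)).mono fun y hy => (hc y hy).symm
  refine (aestronglyMeasurable_union_iff.2 ⟨hcont.aestronglyMeasurable hTmeas, hout⟩).mono_set ?_
  rw [union_sdiff_self]
  exact subset_union_right

section Coefficients

variable {P Q : ℝ → ℝ} {p q : ℝ}

theorem integrableOn_one_add_abs_add_abs (hP : IntegrableOn P (Icc p q))
    (hQ : IntegrableOn Q (Icc p q)) : IntegrableOn (fun s => 1 + |P s| + |Q s|) (Icc p q) :=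
  ((integrableOn_const measure_Icc_lt_top.ne).add hP.abs).add hQ.abs

theorem integral_one_add_abs_add_abs_le (hP : IntegrableOn P (Icc p q))
    (hQ : IntegrableOn Q (Icc p q)) {y : ℝ} (hy : y ∈ Icc p q) :
    ∫ s in p..y, (1 + |P s| + |Q s|) ≤ ∫ s in p..q, (1 + |P s| + |Q s|) :=
  integral_mono_interval le_rfl hy.1 hy.2 (Eventually.of_forall fun s => by dsimp only; positivity)
    ((integrableOn_one_add_abs_add_abs hP hQ).intervalIntegrable_of_mem
      ⟨le_rfl, hy.1.trans hy.2⟩ ⟨hy.1.trans hy.2, le_rfl⟩)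

end Coefficients

/-- `(u, v)` solves `w' = A w` with `A = [[0, 1], [P, -Q]]` on `[p, q]`, in integrated form. -/
structure IsSolution (P Q : ℝ → ℝ) (p q : ℝ) (u v : ℝ → ℝ) : Prop where
  continuousOn_fst : ContinuousOn u (Icc p q)
  continuousOn_snd : ContinuousOn v (Icc p q)
  integrableOn : IntegrableOn (fun s => P s * u s - Q s * v s) (Icc p q)
  eq_fst : ∀ x ∈ Icc p q, ∀ y ∈ Icc p q, u y = u x + ∫ s in x..y, v s
  eq_snd : ∀ x ∈ Icc p q, ∀ y ∈ Icc p q, v y = v x + ∫ s in x..y, (P s * u s - Q s * v s)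

namespace IsSolution

variable {P Q : ℝ → ℝ} {p q : ℝ} {u v : ℝ → ℝ}

theorem mono (h : IsSolution P Q p q u v) {p' q' : ℝ} (hp : p ≤ p') (hq : q' ≤ q) :
    IsSolution P Q p' q' u v where
  continuousOn_fst := h.continuousOn_fst.mono (Icc_subset_Icc hp hq)
  continuousOn_snd := h.continuousOn_snd.mono (Icc_subset_Icc hp hq)
  integrableOn := h.integrableOn.mono_set (Icc_subset_Icc hp hq)
  eq_fst x hx y hy := h.eq_fst x (Icc_subset_Icc hp hq hx) y (Icc_subset_Icc hp hq hy)
  eq_snd x hx y hy := h.eq_snd x (Icc_subset_Icc hp hq hx) y (Icc_subset_Icc hp hq hy)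

theorem add {u₁ v₁ u₂ v₂ : ℝ → ℝ} (h₁ : IsSolution P Q p q u₁ v₁)
    (h₂ : IsSolution P Q p q u₂ v₂) : IsSolution P Q p q (u₁ + u₂) (v₁ + v₂) where
  continuousOn_fst := h₁.continuousOn_fst.add h₂.continuousOn_fst
  continuousOn_snd := h₁.continuousOn_snd.add h₂.continuousOn_snd
  integrableOn := IntegrableOn.congr_fun (h₁.integrableOn.add h₂.integrableOn) (fun s _ => by
    simp only [Pi.add_apply]; ring) measurableSet_Icc
  eq_fst x hx y hy := by
    simp only [Pi.add_apply]
    rw [integral_add (h₁.continuousOn_snd.integrableOn_Icc.intervalIntegrable_of_mem hx hy)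
      (h₂.continuousOn_snd.integrableOn_Icc.intervalIntegrable_of_mem hx hy),
      h₁.eq_fst x hx y hy, h₂.eq_fst x hx y hy]
    ring
  eq_snd x hx y hy := by
    have hsum : ∫ s in x..y, (P s * (u₁ + u₂) s - Q s * (v₁ + v₂) s) =
        (∫ s in x..y, (P s * u₁ s - Q s * v₁ s)) + ∫ s in x..y, (P s * u₂ s - Q s * v₂ s) := by
      rw [← integral_add (h₁.integrableOn.intervalIntegrable_of_mem hx hy)
        (h₂.integrableOn.intervalIntegrable_of_mem hx hy)]
      congr 1; ext s; simp only [Pi.add_apply]; ring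
    rw [hsum, Pi.add_apply, Pi.add_apply, h₁.eq_snd x hx y hy, h₂.eq_snd x hx y hy]
    ring

theorem const_smul (h : IsSolution P Q p q u v) (c : ℝ) :
    IsSolution P Q p q (c • u) (c • v) where
  continuousOn_fst := h.continuousOn_fst.const_smul c
  continuousOn_snd := h.continuousOn_snd.const_smul c
  integrableOn := IntegrableOn.congr_fun (h.integrableOn.const_mul c) (fun s _ => by
    simp only [Pi.smul_apply, smul_eq_mul]; ring) measurableSet_Icc
  eq_fst x hx y hy := by
    simp only [Pi.smul_apply, smul_eq_mul, intervalIntegral.integral_const_mul,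
      h.eq_fst x hx y hy]
    ring
  eq_snd x hx y hy := by
    have hsmul : ∫ s in x..y, (P s * (c • u) s - Q s * (c • v) s) =
        c * ∫ s in x..y, (P s * u s - Q s * v s) := by
      rw [← intervalIntegral.integral_const_mul]
      congr 1; ext s; simp only [Pi.smul_apply, smul_eq_mul]; ring
    rw [hsmul, Pi.smul_apply, Pi.smul_apply, smul_eq_mul, smul_eq_mul, h.eq_snd x hx y hy]
    ring

theorem abs_add_abs_le (h : IsSolution P Q p q u v) (hP : IntegrableOn P (Icc p q))
    (hQ : IntegrableOn Q (Icc p q)) {x y : ℝ} (hx : x ∈ Icc p q) (hy : y ∈ Icc p q) :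
    |u y| + |v y| ≤ |u x| + |v x| + ∫ s in Ι x y, (1 + |P s| + |Q s|) * (|u s| + |v s|) := by
  have hsub : Ι x y ⊆ Icc p q := uIoc_subset_uIcc.trans (uIcc_subset_Icc hx hy)
  have hv : IntegrableOn v (Ι x y) := h.continuousOn_snd.integrableOn_Icc.mono_set hsub
  have hw := h.integrableOn.mono_set hsub
  have hρm : IntegrableOn (fun s => (1 + |P s| + |Q s|) * (|u s| + |v s|)) (Ι x y) :=
    ((integrableOn_one_add_abs_add_abs hP hQ).mul_continuousOn
      (h.continuousOn_fst.abs.add h.continuousOn_snd.abs) isCompact_Icc).mono_set hsub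
  have hpt : ∀ s, |v s| + |P s * u s - Q s * v s| ≤ (1 + |P s| + |Q s|) * (|u s| + |v s|) :=
    fun s => by
      have := abs_sub (P s * u s) (Q s * v s)
      rw [abs_mul, abs_mul] at this
      nlinarith [abs_nonneg (P s), abs_nonneg (Q s), abs_nonneg (u s), abs_nonneg (v s)]
  have hu : |u y| ≤ |u x| + ∫ s in Ι x y, |v s| := by
    rw [h.eq_fst x hx y hy]
    refine (abs_add_le _ _).trans (add_le_add_right ?_ _)
    simpa only [Real.norm_eq_abs] using norm_integral_le_integral_norm_uIoc (f := v) (μ := volume)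
  have hv' : |v y| ≤ |v x| + ∫ s in Ι x y, |P s * u s - Q s * v s| := by
    rw [h.eq_snd x hx y hy]
    refine (abs_add_le _ _).trans (add_le_add_right ?_ _)
    simpa only [Real.norm_eq_abs] using norm_integral_le_integral_norm_uIoc
      (f := fun s => P s * u s - Q s * v s) (μ := volume)
  have hsum : (∫ s in Ι x y, |v s|) + ∫ s in Ι x y, |P s * u s - Q s * v s| ≤
      ∫ s in Ι x y, (1 + |P s| + |Q s|) * (|u s| + |v s|) := by
    rw [← integral_add hv.abs hw.abs]
    exact setIntegral_mono_on (hv.abs.add hw.abs) hρm measurableSet_uIoc fun s _ => hpt s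
  linarith

theorem abs_add_abs_le_two_pow_mul_left (h : IsSolution P Q p q u v)
    (hP : IntegrableOn P (Icc p q)) (hQ : IntegrableOn Q (Icc p q)) {n : ℕ}
    (hn : ∫ s in p..q, (1 + |P s| + |Q s|) ≤ n / 2) {y : ℝ} (hy : y ∈ Icc p q) :
    |u y| + |v y| ≤ 2 ^ (n + 1) * (|u p| + |v p|) := by
  refine le_two_pow_mul_of_le_add_integral_left (m := fun s => |u s| + |v s|)
    (integrableOn_one_add_abs_add_abs hP hQ) (fun _ _ => by positivity)
    (h.continuousOn_fst.abs.add h.continuousOn_snd.abs) (fun _ _ => by positivity)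
    (fun t ht => ?_) hn y hy
  simpa [uIoc_of_le ht.1, integral_of_le ht.1] using
    h.abs_add_abs_le hP hQ ⟨le_rfl, hy.1.trans hy.2⟩ ht

theorem abs_add_abs_le_two_pow_mul_right (h : IsSolution P Q p q u v)
    (hP : IntegrableOn P (Icc p q)) (hQ : IntegrableOn Q (Icc p q)) {n : ℕ}
    (hn : ∫ s in p..q, (1 + |P s| + |Q s|) ≤ n / 2) {y : ℝ} (hy : y ∈ Icc p q) :
    |u y| + |v y| ≤ 2 ^ (n + 1) * (|u q| + |v q|) := by
  refine le_two_pow_mul_of_le_add_integral_right (m := fun s => |u s| + |v s|)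
    (integrableOn_one_add_abs_add_abs hP hQ) (fun _ _ => by positivity)
    (h.continuousOn_fst.abs.add h.continuousOn_snd.abs) (fun _ _ => by positivity)
    (fun t ht => ?_) hn y hy
  simpa [uIoc_of_ge ht.2, integral_of_le ht.2] using
    h.abs_add_abs_le hP hQ ⟨hy.1.trans hy.2, le_rfl⟩ ht

theorem eq_zero_of_eq_zero (h : IsSolution P Q p q u v) (hP : IntegrableOn P (Icc p q))
    (hQ : IntegrableOn Q (Icc p q)) {x : ℝ} (hx : x ∈ Icc p q) (hux : u x = 0) (hvx : v x = 0)
    {y : ℝ} (hy : y ∈ Icc p q) : u y = 0 ∧ v y = 0 := by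
  have hle : |u y| + |v y| ≤ 0 := by
    rcases le_total x y with hxy | hyx
    · obtain ⟨n, hn⟩ := exists_nat_ge (2 * ∫ s in x..q, (1 + |P s| + |Q s|))
      simpa [hux, hvx] using (h.mono hx.1 le_rfl).abs_add_abs_le_two_pow_mul_left
        (hP.mono_set (Icc_subset_Icc hx.1 le_rfl)) (hQ.mono_set (Icc_subset_Icc hx.1 le_rfl))
        (n := n) (by linarith) ⟨hxy, hy.2⟩
    · obtain ⟨n, hn⟩ := exists_nat_ge (2 * ∫ s in p..x, (1 + |P s| + |Q s|))
      simpa [hux, hvx] using (h.mono le_rfl hx.2).abs_add_abs_le_two_pow_mul_right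
        (hP.mono_set (Icc_subset_Icc le_rfl hx.2)) (hQ.mono_set (Icc_subset_Icc le_rfl hx.2))
        (n := n) (by linarith) ⟨hy.1, hyx⟩
  have := abs_nonneg (u y)
  have := abs_nonneg (v y)
  exact ⟨abs_eq_zero.1 (by linarith), abs_eq_zero.1 (by linarith)⟩

theorem of_integrableOn {c₁ c₂ : ℝ} (hu : ∀ y ∈ Icc p q, u y = c₁ + ∫ s in p..y, v s)
    (hv : ∀ y ∈ Icc p q, v y = c₂ + ∫ s in p..y, (P s * u s - Q s * v s))
    (hw : IntegrableOn (fun s => P s * u s - Q s * v s) (Icc p q)) :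
    IsSolution P Q p q u v := by
  have hvc := continuousOn_of_forall_eq_add_integral hw hv
  exact ⟨continuousOn_of_forall_eq_add_integral hvc.integrableOn_Icc hu, hvc, hw,
    fun x hx y hy => eq_add_integral_of_forall_eq_add_integral hvc.integrableOn_Icc hu hx hy,
    fun x hx y hy => eq_add_integral_of_forall_eq_add_integral hw hv hx hy⟩

theorem of_eq_add_integral (hP : IntegrableOn P (Icc p q)) (hQ : IntegrableOn Q (Icc p q))
    {c₁ c₂ : ℝ} (hu : ∀ y ∈ Icc p q, u y = c₁ + ∫ s in p..y, v s)
    (hv : ∀ y ∈ Icc p q, v y = c₂ + ∫ s in p..y, (P s * u s - Q s * v s)) :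
    IsSolution P Q p q u v := by
  set T := {y ∈ Icc p q | IntegrableOn (fun s => P s * u s - Q s * v s) (Icc p y)}
  have hT : ∀ y ∈ T, Icc p y ⊆ T := fun y hy t ht =>
    ⟨⟨ht.1, ht.2.trans hy.1.2⟩, hy.2.mono_set (Icc_subset_Icc le_rfl ht.2)⟩
  have hsol : ∀ y ∈ T, IsSolution P Q p y u v := fun y hy =>
    of_integrableOn (fun t ht => hu t ⟨ht.1, ht.2.trans hy.1.2⟩)
      (fun t ht => hv t ⟨ht.1, ht.2.trans hy.1.2⟩) hy.2
  -- Off `T` the integral in `hv` is the junk value `0`, so `v` is bounded by Gronwall on `T`.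
  have hconst : ∀ y ∈ Icc p q \ T, v y = c₂ := fun y hy => by
    rw [hv y hy.1, integral_undef fun h =>
      hy.2 ⟨hy.1, (intervalIntegrable_iff_integrableOn_Icc_of_le hy.1.1).1 h⟩, add_zero]
  obtain ⟨n, hn⟩ := exists_nat_ge (2 * ∫ s in p..q, (1 + |P s| + |Q s|))
  set K := max (2 ^ (n + 1) * (|c₁| + |c₂|)) |c₂|
  have hbound : ∀ y ∈ Icc p q, |v y| ≤ K := by
    intro y hy
    by_cases hyT : y ∈ T
    · have hsub : Icc p y ⊆ Icc p q := Icc_subset_Icc le_rfl hy.2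
      have hp : p ∈ Icc p q := ⟨le_rfl, hy.1.trans hy.2⟩
      have := (hsol y hyT).abs_add_abs_le_two_pow_mul_left (hP.mono_set hsub) (hQ.mono_set hsub)
        (n := n) ((integral_one_add_abs_add_abs_le hP hQ hy).trans (by linarith)) ⟨hy.1, le_rfl⟩
      simp only [hu p hp, hv p hp, integral_same, add_zero] at this
      exact le_max_of_le_left (by linarith [abs_nonneg (u y)])
    · rw [hconst y ⟨hy, hyT⟩]
      exact le_max_right _ _
  have hvm : AEStronglyMeasurable v (volume.restrict (Icc p q)) :=
    aestronglyMeasurable_restrict_Icc_of_continuousOn (fun _ hy => hy.1) hT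
      (fun y hy => (hsol y hy).continuousOn_snd) hconst
  have hvb : ∀ᵐ s ∂volume.restrict (Icc p q), ‖v s‖ ≤ K :=
    (ae_restrict_mem measurableSet_Icc).mono hbound
  have huc := continuousOn_of_forall_eq_add_integral
    (IntegrableOn.of_bound measure_Icc_lt_top hvm _ hvb) hu
  exact of_integrableOn hu hv
    ((hP.mul_continuousOn huc isCompact_Icc).sub (Integrable.mul_bdd hQ hvm hvb))

theorem of_forall_eq_add_integral {I : Set ℝ} {U V : ℝ → ℝ → ℝ} {c₁ c₂ a b : ℝ}
    (hIab : Icc a b ⊆ I) (hP : IntegrableOn P (Icc a b)) (hQ : IntegrableOn Q (Icc a b))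
    (hU : ∀ x ∈ I, ∀ y ∈ I, U x y = c₁ + ∫ z in x..y, V x z)
    (hV : ∀ x ∈ I, ∀ y ∈ I, V x y = c₂ + ∫ z in x..y, (P z * U x z - Q z * V x z))
    {x : ℝ} (hx : x ∈ Icc a b) : IsSolution P Q x b (U x) (V x) := by
  have hsub : Icc x b ⊆ Icc a b := Icc_subset_Icc hx.1 le_rfl
  exact of_eq_add_integral (hP.mono_set hsub) (hQ.mono_set hsub)
    (fun y hy => hU x (hIab hx) y (hIab (hsub hy))) (fun y hy => hV x (hIab hx) y (hIab (hsub hy)))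

end IsSolution

def solutionSpace (P Q : ℝ → ℝ) (p q : ℝ) : Submodule ℝ ((ℝ → ℝ) × (ℝ → ℝ)) where
  carrier := {X | IsSolution P Q p q X.1 X.2}
  add_mem' h₁ h₂ := h₁.add h₂
  zero_mem' := ⟨continuousOn_const, continuousOn_const, by simp, by simp, by simp⟩
  smul_mem' c _ h := h.const_smul c

namespace IsSolution

variable {P Q : ℝ → ℝ} {p q : ℝ} {u₁ v₁ u₂ v₂ : ℝ → ℝ}

theorem wronskian_ne_zero (h₁ : IsSolution P Q p q u₁ v₁) (h₂ : IsSolution P Q p q u₂ v₂)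
    (hP : IntegrableOn P (Icc p q)) (hQ : IntegrableOn Q (Icc p q)) {x y : ℝ}
    (hx : x ∈ Icc p q) (hy : y ∈ Icc p q) (hW : u₁ x * v₂ x - u₂ x * v₁ x ≠ 0) :
    u₁ y * v₂ y - u₂ y * v₁ y ≠ 0 := by
  intro hWy
  obtain ⟨c, hc, hcy⟩ : ∃ c ≠ 0, Matrix.mulVec !![u₁ y, u₂ y; v₁ y, v₂ y] c = 0 :=
    Matrix.exists_mulVec_eq_zero_iff.2 (by simpa [Matrix.det_fin_two] using hWy)
  have hX : c 0 • (u₁, v₁) + c 1 • (u₂, v₂) ∈ solutionSpace P Q p q :=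
    add_mem (Submodule.smul_mem _ _ h₁) (Submodule.smul_mem _ _ h₂)
  have hcy' := congrFun hcy
  simp only [Matrix.mulVec_fin_two] at hcy'
  have hzero := eq_zero_of_eq_zero hX hP hQ hy (by simpa [mul_comm] using hcy' 0)
    (by simpa [mul_comm] using hcy' 1) hx
  have hdet : (!![u₁ x, u₂ x; v₁ x, v₂ x]).det = 0 := by
    refine Matrix.exists_mulVec_eq_zero_iff.1 ⟨c, hc, ?_⟩
    ext i
    fin_cases i
    · simpa [Matrix.vecHead, Matrix.vecTail, mul_comm] using hzero.1
    · simpa [Matrix.vecHead, Matrix.vecTail, mul_comm] using hzero.2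
  exact hW (by simpa [Matrix.det_fin_two] using hdet)

theorem wronskian_mul_eq (h₁ : IsSolution P Q p q u₁ v₁) (h₂ : IsSolution P Q p q u₂ v₂)
    (hP : IntegrableOn P (Icc p q)) (hQ : IntegrableOn Q (Icc p q)) {z : ℝ} (hz : z ∈ Icc p q)
    {u v : ℝ → ℝ} (h : IsSolution P Q z q u v) (hu : u z = 0) (hv : v z = 1) {y : ℝ}
    (hy : y ∈ Icc z q) : (u₁ z * v₂ z - u₂ z * v₁ z) * u y = u₁ z * u₂ y - u₂ z * u₁ y := by
  have hsub : Icc z q ⊆ Icc p q := Icc_subset_Icc hz.1 le_rfl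
  have hD : (u₁ z • (u₂, v₂) - u₂ z • (u₁, v₁)) - (u₁ z * v₂ z - u₂ z * v₁ z) • (u, v) ∈
      solutionSpace P Q z q :=
    sub_mem (sub_mem (Submodule.smul_mem _ _ (h₂.mono hz.1 le_rfl))
      (Submodule.smul_mem _ _ (h₁.mono hz.1 le_rfl))) (Submodule.smul_mem _ _ h)
  have := (eq_zero_of_eq_zero hD (hP.mono_set hsub) (hQ.mono_set hsub)
    ⟨le_rfl, hz.2⟩ (by simp [hu]; ring) (by simp [hv]) hy).1
  simp only [Prod.fst_sub, Prod.smul_fst, Pi.sub_apply, Pi.smul_apply, smul_eq_mul] at this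
  linarith

end IsSolution

theorem continuousOn_integral_mul_of_eq_mul_sub_mul {k A B C D : ℝ → ℝ} {K : ℝ → ℝ → ℝ}
    {a b : ℝ} (hk : IntegrableOn k (Icc a b)) (hA : ContinuousOn A (Icc a b))
    (hB : ContinuousOn B (Icc a b)) (hC : ContinuousOn C (Icc a b))
    (hD : ContinuousOn D (Icc a b))
    (hK : ∀ y ∈ Icc a b, ∀ z ∈ Icc a y, K z y = A z * B y - C z * D y) :
    ContinuousOn (fun y => ∫ z in a..y, k z * K z y) (Icc a b) := by
  have hkA := hk.mul_continuousOn hA isCompact_Icc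
  have hkC := hk.mul_continuousOn hC isCompact_Icc
  refine ((hB.mul (continuousOn_integral_of_integrableOn_Icc hkA)).sub
    (hD.mul (continuousOn_integral_of_integrableOn_Icc hkC))).congr fun y hy => ?_
  have ha : a ∈ Icc a b := ⟨le_rfl, hy.1.trans hy.2⟩
  rw [Pi.sub_apply, Pi.mul_apply, Pi.mul_apply, ← intervalIntegral.integral_const_mul,
    ← intervalIntegral.integral_const_mul,
    ← integral_sub ((hkA.intervalIntegrable_of_mem ha hy).const_mul _)
      ((hkC.intervalIntegrable_of_mem ha hy).const_mul _)]
  refine integral_congr fun z hz => ?_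
  rw [uIcc_of_le hy.1] at hz
  simp only [hK y hy z hz]
  ring

theorem continuousOn_integral_mul_of_isSolution {P Q k u v : ℝ → ℝ} {U V : ℝ → ℝ → ℝ}
    {a b : ℝ} (hP : IntegrableOn P (Icc a b)) (hQ : IntegrableOn Q (Icc a b))
    (hk : IntegrableOn k (Icc a b)) (h : IsSolution P Q a b u v) (hua : u a ≠ 0)
    (hUV : ∀ z ∈ Icc a b, IsSolution P Q z b (U z) (V z)) (hU : ∀ z ∈ Icc a b, U z z = 0)
    (hV : ∀ z ∈ Icc a b, V z z = 1) :
    ContinuousOn (fun y => ∫ z in a..y, k z * U z y) (Icc a b) := by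
  rcases (Icc a b).eq_empty_or_nonempty with hempty | ⟨y, hy⟩
  · simp [hempty]
  have ha : a ∈ Icc a b := ⟨le_rfl, hy.1.trans hy.2⟩
  set W := fun z => u z * V a z - U a z * v z
  have hWc : ContinuousOn W (Icc a b) := (h.continuousOn_fst.mul (hUV a ha).continuousOn_snd).sub
    ((hUV a ha).continuousOn_fst.mul h.continuousOn_snd)
  have hW : ∀ z ∈ Icc a b, W z ≠ 0 := fun z hz =>
    h.wronskian_ne_zero (hUV a ha) hP hQ ha hz (by simpa [hU a ha, hV a ha] using hua)
  refine continuousOn_integral_mul_of_eq_mul_sub_mul hk (h.continuousOn_fst.div hWc hW)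
    (hUV a ha).continuousOn_fst ((hUV a ha).continuousOn_fst.div hWc hW) h.continuousOn_fst
    fun y hy z hz => ?_
  have hz' : z ∈ Icc a b := ⟨hz.1, hz.2.trans hy.2⟩
  have := h.wronskian_mul_eq (hUV a ha) hP hQ hz' (hUV z hz') (hU z hz') (hV z hz') ⟨hz.2, hy.2⟩
  rw [Pi.div_apply, Pi.div_apply, div_mul_eq_mul_div, div_mul_eq_mul_div, div_sub_div_same,
    eq_div_iff (hW z hz')]
  linarith

theorem tendsto_div_mul_sub_atTop {N D : ℝ → ℝ} {a b c d : ℝ} (hab : a < b)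
    (hN : ContinuousWithinAt N (Icc a b) b) (hNb : 0 < N b)
    (hD : ContinuousWithinAt D (Icc a b) b) (hDb : D b = 0) (hDpos : ∀ y ∈ Ioo a b, 0 < D y)
    (hc : 0 < c) :
    Tendsto (fun ε => N (b - ε) / D (b - ε) * c - d) (𝓝[>] 0) atTop := by
  have hleft : Tendsto (fun ε : ℝ => b - ε) (𝓝[>] 0) (𝓝[<] b) := by
    refine tendsto_nhdsWithin_iff.2
      ⟨?_, eventually_nhdsWithin_of_forall fun ε hε => sub_lt_self b hε⟩
    simpa using ((continuous_sub_left b).tendsto 0).mono_left nhdsWithin_le_nhds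
  have hN' : Tendsto N (𝓝[<] b) (𝓝 (N b)) :=
    (hN.mono_of_mem_nhdsWithin (Icc_mem_nhdsLT hab)).tendsto
  have hD' : Tendsto D (𝓝[<] b) (𝓝[>] 0) := tendsto_nhdsWithin_iff.2
    ⟨hDb ▸ (hD.mono_of_mem_nhdsWithin (Icc_mem_nhdsLT hab)).tendsto,
      eventually_of_mem (Ioo_mem_nhdsLT hab) hDpos⟩
  have hdiv : Tendsto (fun y => N y / D y) (𝓝[<] b) atTop := by
    simpa only [div_eq_mul_inv, Function.comp_def] using
      hN'.pos_mul_atTop hNb (tendsto_inv_nhdsGT_zero.comp hD')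
  simpa only [sub_eq_add_neg, Function.comp_def] using
    tendsto_atTop_add_const_right _ (-d) ((hdiv.comp hleft).atTop_mul_const hc)

theorem stmt_18_general
    (I : Set ℝ) (hIconn : I.OrdConnected)
    (α r σ : ℝ → ℝ)
    (hint2 : MeasureTheory.LocallyIntegrableOn (fun z => α z / (σ z) ^ 2) I)
    (hint3 : MeasureTheory.LocallyIntegrableOn (fun z => r z / (σ z) ^ 2) I)
    (φ11 φ12 φ21 φ22 : ℝ → ℝ → ℝ)
    (hφ11 : ∀ x ∈ I, ∀ y ∈ I, φ11 x y = 1 + ∫ z in x..y, φ21 x z)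
    (hφ12 : ∀ x ∈ I, ∀ y ∈ I, φ12 x y = ∫ z in x..y, φ22 x z)
    (hφ21 : ∀ x ∈ I, ∀ y ∈ I, φ21 x y =
      ∫ z in x..y, (2 * r z / (σ z) ^ 2 * φ11 x z - 2 * α z / (σ z) ^ 2 * φ21 x z))
    (hφ22 : ∀ x ∈ I, ∀ y ∈ I, φ22 x y = 1 +
      ∫ z in x..y, (2 * r z / (σ z) ^ 2 * φ12 x z - 2 * α z / (σ z) ^ 2 * φ22 x z))
    (g : ℝ → ℝ)
    (hgint : MeasureTheory.LocallyIntegrableOn (fun z => g z / (σ z) ^ 2) I)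
    (a b : ℝ) (ha : a ∈ I) (hb : b ∈ I) (hab : a < b)
    (hpos : ∀ x ∈ Set.Ioo a b, 0 < φ12 a x)
    (h0 : φ12 a b = 0)
    (hgpos : 0 < ∫ z in a..b, g z * φ12 z b / (σ z) ^ 2) :
    ∀ x ∈ Set.Ioo a b,
      Filter.Tendsto (fun ε : ℝ =>
        (∫ z in a..(b - ε), 2 * g z / (σ z) ^ 2 * φ12 z (b - ε)) / φ12 a (b - ε)
            * φ12 a x
          - ∫ z in a..x, 2 * g z / (σ z) ^ 2 * φ12 z x)
        (nhdsWithin 0 (Set.Ioi 0)) Filter.atTop := by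
  intro x hx
  have hIab : Icc a b ⊆ I := hIconn.out ha hb
  have hcoef : ∀ f : ℝ → ℝ, LocallyIntegrableOn (fun z => f z / σ z ^ 2) I →
      IntegrableOn (fun z => 2 * f z / σ z ^ 2) (Icc a b) := fun _ hf =>
    IntegrableOn.congr_fun ((hf.integrableOn_compact_subset hIab isCompact_Icc).const_mul 2)
      (fun _ _ => (mul_div_assoc ..).symm) measurableSet_Icc
  have hsol₁ := fun z (hz : z ∈ Icc a b) => IsSolution.of_forall_eq_add_integral hIab
    (hcoef r hint3) (hcoef α hint2) hφ11
    (fun x hx y hy => (hφ21 x hx y hy).trans (zero_add _).symm) hz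
  have hsol₂ := fun z (hz : z ∈ Icc a b) => IsSolution.of_forall_eq_add_integral hIab
    (hcoef r hint3) (hcoef α hint2)
    (fun x hx y hy => (hφ12 x hx y hy).trans (zero_add _).symm) hφ22 hz
  have ha' : a ∈ Icc a b := left_mem_Icc.2 hab.le
  have hb' : b ∈ Icc a b := right_mem_Icc.2 hab.le
  have hN := continuousOn_integral_mul_of_isSolution (hcoef r hint3) (hcoef α hint2)
    (hcoef g hgint) (hsol₁ a ha') (by simp [hφ11 a ha a ha]) hsol₂
    (fun z hz => by simp [hφ12 z (hIab hz) z (hIab hz)])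
    (fun z hz => by simp [hφ22 z (hIab hz) z (hIab hz)])
  have hNb : 0 < ∫ z in a..b, 2 * g z / σ z ^ 2 * φ12 z b := by
    rw [integral_congr (g := fun z => 2 * (g z * φ12 z b / σ z ^ 2)) fun z _ => by ring,
      intervalIntegral.integral_const_mul]
    exact mul_pos two_pos hgpos
  exact tendsto_div_mul_sub_atTop (N := fun y => ∫ z in a..y, 2 * g z / σ z ^ 2 * φ12 z y)
    (d := ∫ z in a..x, 2 * g z / σ z ^ 2 * φ12 z x) hab (hN b hb') hNb
    ((hsol₂ a ha').continuousOn_fst b hb') h0 hpos (hpos x hx)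

/-- Blow-up of two-point boundary solutions: if φ₁₂(a,·) > 0 on (a,b),
φ₁₂(a,b) = 0 and ∫ₐᵇ g φ₁₂(·,b)/σ² > 0, then v_ε(x) → +∞ as ε → 0⁺ for every
x ∈ (a,b), where v_ε is the solution vanishing at a and b−ε. -/
theorem stmt_18
    (I : Set ℝ) (hI : IsOpen I) (hIconn : I.OrdConnected)
    (α r σ : ℝ → ℝ)
    (hmα : Measurable α) (hmr : Measurable r) (hmσ : Measurable σ)
    (hσpos : ∀ x ∈ I, 0 < σ x)
    (hint1 : MeasureTheory.LocallyIntegrableOn (fun z => 1 / (σ z) ^ 2) I)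
    (hint2 : MeasureTheory.LocallyIntegrableOn (fun z => α z / (σ z) ^ 2) I)
    (hint3 : MeasureTheory.LocallyIntegrableOn (fun z => r z / (σ z) ^ 2) I)
    (φ11 φ12 φ21 φ22 : ℝ → ℝ → ℝ)
    (hφ11 : ∀ x ∈ I, ∀ y ∈ I, φ11 x y = 1 + ∫ z in x..y, φ21 x z)
    (hφ12 : ∀ x ∈ I, ∀ y ∈ I, φ12 x y = ∫ z in x..y, φ22 x z)
    (hφ21 : ∀ x ∈ I, ∀ y ∈ I, φ21 x y =
      ∫ z in x..y, (2 * r z / (σ z) ^ 2 * φ11 x z - 2 * α z / (σ z) ^ 2 * φ21 x z))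
    (hφ22 : ∀ x ∈ I, ∀ y ∈ I, φ22 x y = 1 +
      ∫ z in x..y, (2 * r z / (σ z) ^ 2 * φ12 x z - 2 * α z / (σ z) ^ 2 * φ22 x z))
    (g : ℝ → ℝ) (hmg : Measurable g) (hg0 : ∀ x ∈ I, 0 ≤ g x)
    (hgint : MeasureTheory.LocallyIntegrableOn (fun z => g z / (σ z) ^ 2) I)
    (a b : ℝ) (ha : a ∈ I) (hb : b ∈ I) (hab : a < b)
    (hpos : ∀ x ∈ Set.Ioo a b, 0 < φ12 a x)
    (h0 : φ12 a b = 0)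
    (hgpos : 0 < ∫ z in a..b, g z * φ12 z b / (σ z) ^ 2) :
    ∀ x ∈ Set.Ioo a b,
      Filter.Tendsto (fun ε : ℝ =>
        (∫ z in a..(b - ε), 2 * g z / (σ z) ^ 2 * φ12 z (b - ε)) / φ12 a (b - ε)
            * φ12 a x
          - ∫ z in a..x, 2 * g z / (σ z) ^ 2 * φ12 z x)
        (nhdsWithin 0 (Set.Ioi 0)) Filter.atTop :=
  stmt_18_general I hIconn α r σ hint2 hint3 φ11 φ12 φ21 φ22 hφ11 hφ12 hφ21 hφ22 g hgint a b ha hb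
    hab hpos h0 hgpos
end
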